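/- arXiv:2509.03589 — 7 statements merged into one kernel-verified Lean document; each statement's English description precedes it below -/
import Mathlib

section
/- For every bounded operator a on H, the group average a_S exists (i.e. for each ψ the Bochner integral ∫_S U(s) a U(s)⁻¹ ψ ds exists and defines a bounded operator a_S), a_S commutes with U(t) for every t ∈ S, and if a already commutes with U(s) for all s ∈ S then a_S = a. Moreover, under the factorization assumption, if a ∈ M then a_S ∈ M. -/
/-!
Strong continuity together with the uniform bound `‖U s‖ ≤ 1` makes `s ↦ U s (f s)` continuous
for continuous `f`, so the integrand `s ↦ U s a U s⁻¹ ψ` is continuous, hence integrable on the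
compact group, and `‖U s a U s⁻¹‖ = ‖a‖` makes `ψ ↦ ∫ U s a U s⁻¹ ψ` a bounded operator.
The substitution `s ↦ t s` (left invariance of Haar measure) gives `a_S U t = U t a_S`.
If `a ∈ M` and `U s = u v`, then `U s a U s⁻¹ = u a u*` because `v ∈ M'` commutes with `a`;
so every conjugate lies in `M`, bounded operators of `M'` pass through the integral, and
`a_S ∈ M'' = M`.
-/

open MeasureTheory Filter Topology

section StrongOperatorTopology

variable {X 𝕜 E F : Type*} [TopologicalSpace X] [NontriviallyNormedField 𝕜]
  [SeminormedAddCommGroup E] [SeminormedAddCommGroup F] [NormedSpace 𝕜 E] [NormedSpace 𝕜 F]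

theorem Continuous.clm_apply_of_norm_le {A : X → E →L[𝕜] F} {f : X → E} {C : ℝ}
    (hf : Continuous f) (hA : ∀ x, Continuous fun s => A s x) (hC : ∀ s, ‖A s‖ ≤ C) :
    Continuous fun s => A s (f s) := by
  refine continuous_iff_continuousAt.2 fun t => tendsto_iff_norm_sub_tendsto_zero.2 ?_
  have hsplit : ∀ s, ‖A s (f s) - A t (f t)‖ ≤ C * ‖f s - f t‖ + ‖A s (f t) - A t (f t)‖ :=
    fun s => calc
      ‖A s (f s) - A t (f t)‖ = ‖A s (f s - f t) + (A s (f t) - A t (f t))‖ := by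
        rw [map_sub]; abel_nf
      _ ≤ ‖A s (f s - f t)‖ + ‖A s (f t) - A t (f t)‖ := norm_add_le _ _
      _ ≤ C * ‖f s - f t‖ + ‖A s (f t) - A t (f t)‖ := by
        gcongr; exact (A s).le_of_opNorm_le (hC s) _
  have hlim : Tendsto (fun s => C * ‖f s - f t‖ + ‖A s (f t) - A t (f t)‖) (𝓝 t) (𝓝 0) := by
    simpa using ((tendsto_iff_norm_sub_tendsto_zero.1 (hf.tendsto t)).const_mul C).add
      (tendsto_iff_norm_sub_tendsto_zero.1 ((hA (f t)).tendsto t))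
  exact squeeze_zero (fun _ => norm_nonneg _) hsplit hlim

end StrongOperatorTopology

section IntegralOfOperators

variable {α 𝕜 E F : Type*} [MeasurableSpace α] [RCLike 𝕜]
  [NormedAddCommGroup E] [NormedAddCommGroup F] [NormedSpace 𝕜 E] [NormedSpace 𝕜 F]
  [NormedSpace ℝ F] [SMulCommClass ℝ 𝕜 F]

theorem exists_clm_apply_eq_integral (μ : Measure α) [IsFiniteMeasure μ] {A : α → E →L[𝕜] F}
    (hA : ∀ x, Integrable (fun s => A s x) μ) {C : ℝ} (hC : ∀ s, ‖A s‖ ≤ C) :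
    ∃ T : E →L[𝕜] F, ∀ x, T x = ∫ s, A s x ∂μ := by
  let T : E →ₗ[𝕜] F :=
    { toFun := fun x => ∫ s, A s x ∂μ
      map_add' := fun x y => by simp only [map_add, integral_add (hA x) (hA y)]
      map_smul' := fun c x => by simp only [map_smul, integral_smul, RingHom.id_apply] }
  refine ⟨T.mkContinuous (C * μ.real Set.univ) fun x => ?_, fun _ => rfl⟩
  calc ‖T x‖ ≤ C * ‖x‖ * μ.real Set.univ :=
        norm_integral_le_of_norm_le_const (ae_of_all _ fun s => (A s).le_of_opNorm_le (hC s) x)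
    _ = C * μ.real Set.univ * ‖x‖ := by ring

end IntegralOfOperators

section Conjugation

variable {G R : Type*} [Group G] [Monoid R] [StarMul R] (ρ : G →* unitary R)

theorem coe_map_inv_eq_star (s : G) : (ρ s⁻¹ : R) = star (ρ s : R) := by
  rw [map_inv, ← Unitary.star_eq_inv, Unitary.coe_star]

theorem conj_mul_left_mul (a : R) (t s : G) :
    (ρ (t * s) : R) * a * ρ (t * s)⁻¹ * ρ t = ρ t * ((ρ s : R) * a * ρ s⁻¹) := by
  have hinv : (ρ t⁻¹ : R) * ρ t = 1 := by
    rw [← Submonoid.coe_mul, ← map_mul, inv_mul_cancel, map_one, Submonoid.coe_one]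
  simp only [mul_inv_rev, map_mul, Submonoid.coe_mul, mul_assoc, hinv, mul_one]

theorem conj_eq_self_of_commute {a : R} {s : G} (h : Commute a (ρ s)) :
    (ρ s : R) * a * ρ s⁻¹ = a := by
  rw [← h.eq, mul_assoc, ← Submonoid.coe_mul, ← map_mul, mul_inv_cancel, map_one,
    Submonoid.coe_one, mul_one]

end Conjugation

theorem norm_conj {G R : Type*} [Group G] [NormedRing R] [StarRing R] [CStarRing R]
    (ρ : G →* unitary R) (a : R) (s : G) : ‖(ρ s : R) * a * ρ s⁻¹‖ = ‖a‖ := by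
  rw [CStarRing.norm_mul_coe_unitary, CStarRing.norm_coe_unitary_mul]

theorem VonNeumannAlgebra.mem_of_apply_eq_integral {H α : Type*} [NormedAddCommGroup H]
    [InnerProductSpace ℂ H] [CompleteSpace H] [MeasurableSpace α] {μ : Measure α}
    (M : VonNeumannAlgebra H) {A : α → H →L[ℂ] H} (hAM : ∀ s, A s ∈ M)
    (hA : ∀ x, Integrable (fun s => A s x) μ) {T : H →L[ℂ] H} (hT : ∀ x, T x = ∫ s, A s x ∂μ) :
    T ∈ M := by
  rw [← M.commutant_commutant, VonNeumannAlgebra.mem_commutant_iff]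
  intro b hb
  ext x
  change b (T x) = T (b x)
  rw [hT, hT, ← b.integral_comp_comm (hA x)]
  congr 1 with s
  exact congr($(VonNeumannAlgebra.mem_commutant_iff.1 hb (A s) (hAM s)) x).symm

theorem VonNeumannAlgebra.mul_mul_mul_star_mem {H : Type*} [NormedAddCommGroup H]
    [InnerProductSpace ℂ H] [CompleteSpace H] (M : VonNeumannAlgebra H) {u v a : H →L[ℂ] H}
    (hu : u ∈ M) (hv : v ∈ M.commutant) (hv_unitary : v ∈ unitary (H →L[ℂ] H)) (ha : a ∈ M) :
    u * v * a * star (u * v) ∈ M := by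
  have hva : a * v = v * a := VonNeumannAlgebra.mem_commutant_iff.1 hv a ha
  have hvv : v * star v = 1 := Unitary.mul_star_self_of_mem hv_unitary
  have : u * v * a * star (u * v) = u * a * star u := by
    rw [star_mul, mul_assoc u v a, ← hva]
    calc u * (a * v) * (star v * star u) = u * a * (v * star v) * star u := by noncomm_ring
      _ = u * a * star u := by rw [hvv, mul_one]
  rw [this]
  exact mul_mem (mul_mem hu ha) (star_mem hu)

section UnitaryRepresentation

variable {H S : Type*} [NormedAddCommGroup H] [InnerProductSpace ℂ H] [CompleteSpace H]
  [Group S] [TopologicalSpace S] [IsTopologicalGroup S] (ρ : S →* unitary (H →L[ℂ] H))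

theorem continuous_conj_apply (hρ : ∀ x, Continuous fun s => (ρ s : H →L[ℂ] H) x)
    (a : H →L[ℂ] H) (x : H) : Continuous fun s => ((ρ s : H →L[ℂ] H) * a * ρ s⁻¹) x :=
  (a.continuous.comp ((hρ x).comp continuous_inv)).clm_apply_of_norm_le hρ fun s =>
    (ρ s : H →L[ℂ] H).opNorm_le_bound zero_le_one fun x => by rw [Unitary.norm_map, one_mul]

variable [MeasurableSpace S] [BorelSpace S]

theorem integrable_conj_apply [CompactSpace S] (μ : Measure S) [IsFiniteMeasureOnCompacts μ]
    (hρ : ∀ x, Continuous fun s => (ρ s : H →L[ℂ] H) x) (a : H →L[ℂ] H) (x : H) :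
    Integrable (fun s => ((ρ s : H →L[ℂ] H) * a * ρ s⁻¹) x) μ :=
  (continuous_conj_apply ρ hρ a x).integrable_of_hasCompactSupport (.of_compactSpace _)

theorem integral_conj_apply_map (μ : Measure S) [μ.IsMulLeftInvariant] (a : H →L[ℂ] H) {x : H}
    (hx : Integrable (fun s => ((ρ s : H →L[ℂ] H) * a * ρ s⁻¹) x) μ) (t : S) :
    ∫ s, ((ρ s : H →L[ℂ] H) * a * ρ s⁻¹) ((ρ t : H →L[ℂ] H) x) ∂μ =
      (ρ t : H →L[ℂ] H) (∫ s, ((ρ s : H →L[ℂ] H) * a * ρ s⁻¹) x ∂μ) := by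
  rw [← integral_mul_left_eq_self _ t, ← (ρ t : H →L[ℂ] H).integral_comp_comm hx]
  congr 1 with s
  exact congr($(conj_mul_left_mul ρ a t s) x)

end UnitaryRepresentation

theorem integral_conj_apply_of_commute {H S : Type*} [NormedAddCommGroup H]
    [InnerProductSpace ℂ H] [CompleteSpace H] [Group S] [MeasurableSpace S]
    (ρ : S →* unitary (H →L[ℂ] H)) (μ : Measure S) [IsProbabilityMeasure μ] {a : H →L[ℂ] H}
    (ha : ∀ s, Commute a (ρ s)) (x : H) : ∫ s, ((ρ s : H →L[ℂ] H) * a * ρ s⁻¹) x ∂μ = a x := by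
  simp_rw [conj_eq_self_of_commute ρ (ha _)]
  simp

theorem group_average_exists_general
    {H : Type*} [NormedAddCommGroup H] [InnerProductSpace ℂ H] [CompleteSpace H]
    {S : Type*} [Group S] [TopologicalSpace S] [IsTopologicalGroup S]
    [CompactSpace S] [MeasurableSpace S] [BorelSpace S]
    (μ : Measure S) [μ.IsHaarMeasure] [IsProbabilityMeasure μ]
    (U : S → (H →L[ℂ] H))
    (hU_mul : ∀ s t : S, U (s * t) = U s * U t)
    (hU_unitary : ∀ s : S, U s ∈ unitary (H →L[ℂ] H))
    (hU_cont : ∀ ψ : H, Continuous fun s => U s ψ)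
    (M : VonNeumannAlgebra H)
    (hfac : ∀ s : S, ∃ u v : H →L[ℂ] H, u ∈ M ∧ v ∈ M.commutant ∧
      u ∈ unitary (H →L[ℂ] H) ∧ v ∈ unitary (H →L[ℂ] H) ∧ U s = u * v)
    (a : H →L[ℂ] H) :
    (∀ ψ : H, Integrable (fun s => U s (a (U s⁻¹ ψ))) μ) ∧
    ∃ aS : H →L[ℂ] H,
      (∀ ψ : H, aS ψ = ∫ s, U s (a (U s⁻¹ ψ)) ∂μ) ∧
      (∀ t : S, aS * U t = U t * aS) ∧
      ((∀ s : S, a * U s = U s * a) → aS = a) ∧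
      (a ∈ M → aS ∈ M) := by
  let ρ : S →* unitary (H →L[ℂ] H) :=
    MonoidHom.mk' (fun s => ⟨U s, hU_unitary s⟩) fun s t => Subtype.ext (hU_mul s t)
  have hint : ∀ ψ, Integrable (fun s => U s (a (U s⁻¹ ψ))) μ := integrable_conj_apply ρ μ hU_cont a
  obtain ⟨aS, haS⟩ := exists_clm_apply_eq_integral μ hint fun s => (norm_conj ρ a s).le
  refine ⟨hint, aS, haS, fun t => ?_, fun ha => ?_, fun haM => ?_⟩
  · ext ψ
    exact (haS _).trans <| (integral_conj_apply_map ρ μ a (hint ψ) t).trans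
      (congrArg (U t) (haS ψ).symm)
  · ext ψ
    exact (haS ψ).trans (integral_conj_apply_of_commute ρ μ ha ψ)
  · refine M.mem_of_apply_eq_integral (fun s => ?_) hint haS
    obtain ⟨u, v, hu, hv, -, hv_unitary, hUs⟩ := hfac s
    have hconj : U s * a * U s⁻¹ = u * v * a * star (u * v) := by
      rw [show U s⁻¹ = star (U s) from coe_map_inv_eq_star ρ s, hUs]
    exact hconj ▸ M.mul_mul_mul_star_mem hu hv hv_unitary haM

/-- For every bounded operator `a` on `H`, the group average `a_S`
exists (the Bochner integrals `∫ s, U s (a (U s⁻¹ ψ)) ∂μ` exist and define a bounded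
operator `a_S`), `a_S` commutes with `U t` for every `t ∈ S`, and if `a` already
commutes with every `U s` then `a_S = a`.  Moreover, under the factorization
assumption (`U s = u v` with `u ∈ M`, `v ∈ M.commutant` unitaries), if `a ∈ M`
then `a_S ∈ M`. -/
theorem group_average_exists
    {H : Type*} [NormedAddCommGroup H] [InnerProductSpace ℂ H] [CompleteSpace H]
    {S : Type*} [Group S] [TopologicalSpace S] [IsTopologicalGroup S]
    [CompactSpace S] [T2Space S] [MeasurableSpace S] [BorelSpace S]
    (μ : Measure S) [μ.IsHaarMeasure] [IsProbabilityMeasure μ]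
    [μ.IsMulRightInvariant] [μ.IsInvInvariant]
    (U : S → (H →L[ℂ] H))
    (hU_mul : ∀ s t : S, U (s * t) = U s * U t)
    (hU_unitary : ∀ s : S, U s ∈ unitary (H →L[ℂ] H))
    (hU_cont : ∀ ψ : H, Continuous fun s => U s ψ)
    (M : VonNeumannAlgebra H)
    (hfac : ∀ s : S, ∃ u v : H →L[ℂ] H, u ∈ M ∧ v ∈ M.commutant ∧
      u ∈ unitary (H →L[ℂ] H) ∧ v ∈ unitary (H →L[ℂ] H) ∧ U s = u * v)
    (a : H →L[ℂ] H) :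
    (∀ ψ : H, Integrable (fun s => U s (a (U s⁻¹ ψ))) μ) ∧
    ∃ aS : H →L[ℂ] H,
      (∀ ψ : H, aS ψ = ∫ s, U s (a (U s⁻¹ ψ)) ∂μ) ∧
      (∀ t : S, aS * U t = U t * aS) ∧
      ((∀ s : S, a * U s = U s * a) → aS = a) ∧
      (a ∈ M → aS ∈ M) :=
  group_average_exists_general μ U hU_mul hU_unitary hU_cont M hfac a
end

section
/- Under the factorization assumption, the compressed algebras of M and of its commutant commute elementwise: for every a ∈ M and a' ∈ M', (P_S a' P_S)(P_S a P_S) = (P_S a P_S)(P_S a' P_S); equivalently, the compressions c(a) and c(a') commute as bounded operators on K = H_S. -/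
open MeasureTheory

/-!
Write `P = ∫ U s ds`. Since `P` absorbs every `U s` on either side and is idempotent,
`P a P a' P = ∫ P a U(s) a' P ds`. Factor `U s = u v` with `u ∈ M`, `v ∈ M'` unitary:
conjugation by `U s` moves `a' ∈ M'` to `v a' v* ∈ M'`, which commutes with `a`, and this gives
the exchange identity `P a U(s) a' P = P a' U(s)* a P`. Since `U(s)* = U(s⁻¹)`, the inversion
invariance of Haar measure turns `∫ P a' U(s⁻¹) a P ds` back into `P a' P a P`.
-/

theorem mul_mul_mul_mul_eq_of_commute_conj {A : Type*} [Monoid A] {p a a' w w' : A}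
    (hpw : p * w = p) (hwp : w' * p = p) (h : Commute a (w * a' * w')) :
    p * a * w * a' * p = p * a' * w' * a * p :=
  calc p * a * w * a' * p = p * a * w * a' * (w' * p) := by rw [hwp]
    _ = p * (a * (w * a' * w')) * p := by simp only [mul_assoc]
    _ = p * (w * a' * w' * a) * p := by rw [h.eq]
    _ = p * w * a' * w' * a * p := by simp only [mul_assoc]
    _ = p * a' * w' * a * p := by rw [hpw]

theorem star_eq_map_inv_of_mem_unitary {S A : Type*} [Group S] [Monoid A] [StarMul A]
    {U : S → A} (hU_mul : ∀ s t : S, U (s * t) = U s * U t)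
    (hU_unitary : ∀ s : S, U s ∈ unitary A) (s : S) : star (U s) = U s⁻¹ := by
  let V : S →* unitary A := MonoidHom.mk' (fun s => ⟨U s, hU_unitary s⟩) fun s t =>
    Subtype.ext (hU_mul s t)
  have := congrArg Subtype.val (map_inv V s)
  simpa [V, ← Unitary.star_eq_inv] using this.symm

namespace VonNeumannAlgebra

variable {H : Type*} [NormedAddCommGroup H] [InnerProductSpace ℂ H] [CompleteSpace H]

theorem commute_conj_of_mem_commutant {M : VonNeumannAlgebra H} {a a' u v : H →L[ℂ] H}
    (ha : a ∈ M) (ha' : a' ∈ M.commutant) (hu : u ∈ M) (hu_unitary : u ∈ unitary (H →L[ℂ] H))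
    (hv : v ∈ M.commutant) : Commute a (u * v * a' * star (u * v)) := by
  have hconj : v * a' * star v ∈ M.commutant := mul_mem (mul_mem hv ha') (star_mem hv)
  have hu_conj : u * v * a' * star (u * v) = v * a' * star v :=
    calc u * v * a' * star (u * v) = u * (v * a' * star v) * star u := by
          simp only [star_mul, mul_assoc]
      _ = v * a' * star v * (u * star u) := by
          rw [mem_commutant_iff.mp hconj u hu]; simp only [mul_assoc]
      _ = v * a' * star v := by rw [Unitary.mul_star_self_of_mem hu_unitary, mul_one]
  rw [hu_conj]
  exact mem_commutant_iff.mp hconj a ha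

end VonNeumannAlgebra

section Averaging

variable {H : Type*} [NormedAddCommGroup H] [NormedSpace ℂ H] {S : Type*} [MeasurableSpace S]
  {μ : Measure S} {U : S → (H →L[ℂ] H)} {P : H →L[ℂ] H}

theorem integrable_orbit [TopologicalSpace S] [CompactSpace S] [OpensMeasurableSpace S]
    [IsFiniteMeasure μ] (hU_cont : ∀ ψ : H, Continuous fun s => U s ψ) (ψ : H) :
    Integrable (fun s => U s ψ) μ :=
  (hU_cont ψ).integrable_of_hasCompactSupport (.of_compactSpace _)

theorem apply_mul_averaging_mul [CompleteSpace H] [TopologicalSpace S] [CompactSpace S]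
    [OpensMeasurableSpace S] [IsFiniteMeasure μ]
    (hU_cont : ∀ ψ : H, Continuous fun s => U s ψ) (hP : ∀ ψ : H, P ψ = ∫ s, U s ψ ∂μ)
    (A B : H →L[ℂ] H) (ψ : H) : (A * P * B) ψ = ∫ s, (A * U s * B) ψ ∂μ := by
  simp only [mul_apply_eq_comp, hP]
  exact (A.integral_comp_comm (integrable_orbit hU_cont (B ψ))).symm

variable [Group S]

theorem averaging_mul_eq_self [MeasurableMul S] [μ.IsMulRightInvariant]
    (hU_mul : ∀ s t : S, U (s * t) = U s * U t) (hP : ∀ ψ : H, P ψ = ∫ s, U s ψ ∂μ) (t : S) :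
    P * U t = P := by
  ext ψ
  calc (P * U t) ψ = ∫ s, U (s * t) ψ ∂μ := by simp only [mul_apply_eq_comp, hP, hU_mul]
    _ = P ψ := by rw [integral_mul_right_eq_self (fun s => U s ψ) t, hP]

theorem mul_averaging_eq_self [CompleteSpace H] [TopologicalSpace S] [CompactSpace S]
    [OpensMeasurableSpace S] [MeasurableMul S] [IsFiniteMeasure μ] [μ.IsMulLeftInvariant]
    (hU_mul : ∀ s t : S, U (s * t) = U s * U t)
    (hU_cont : ∀ ψ : H, Continuous fun s => U s ψ) (hP : ∀ ψ : H, P ψ = ∫ s, U s ψ ∂μ) (t : S) :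
    U t * P = P := by
  ext ψ
  calc (U t * P) ψ = ∫ s, U (t * s) ψ ∂μ := by
        rw [mul_apply_eq_comp, hP, ← (U t).integral_comp_comm (integrable_orbit hU_cont ψ)]
        simp only [hU_mul, mul_apply_eq_comp]
    _ = P ψ := by rw [integral_mul_left_eq_self (fun s => U s ψ) t, hP]

theorem averaging_mul_self [CompleteSpace H] [TopologicalSpace S] [CompactSpace S]
    [OpensMeasurableSpace S] [MeasurableMul S] [IsProbabilityMeasure μ] [μ.IsMulLeftInvariant]
    (hU_mul : ∀ s t : S, U (s * t) = U s * U t)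
    (hU_cont : ∀ ψ : H, Continuous fun s => U s ψ) (hP : ∀ ψ : H, P ψ = ∫ s, U s ψ ∂μ) :
    P * P = P := by
  ext ψ
  calc (P * P) ψ = ∫ s, (U s * P) ψ ∂μ := hP (P ψ)
    _ = P ψ := by simp [mul_averaging_eq_self hU_mul hU_cont hP]

end Averaging

theorem compressed_algebras_commute_general
    {H : Type*} [NormedAddCommGroup H] [InnerProductSpace ℂ H] [CompleteSpace H]
    {S : Type*} [Group S] [TopologicalSpace S] [IsTopologicalGroup S]
    [CompactSpace S] [MeasurableSpace S] [BorelSpace S]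
    (μ : Measure S) [μ.IsHaarMeasure] [IsProbabilityMeasure μ]
    [μ.IsMulRightInvariant] [μ.IsInvInvariant]
    (U : S → (H →L[ℂ] H))
    (hU_mul : ∀ s t : S, U (s * t) = U s * U t)
    (hU_unitary : ∀ s : S, U s ∈ unitary (H →L[ℂ] H))
    (hU_cont : ∀ ψ : H, Continuous fun s => U s ψ)
    (M : VonNeumannAlgebra H)
    (hfac : ∀ s : S, ∃ u v : H →L[ℂ] H, u ∈ M ∧ v ∈ M.commutant ∧
      u ∈ unitary (H →L[ℂ] H) ∧ v ∈ unitary (H →L[ℂ] H) ∧ U s = u * v)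
    (P : H →L[ℂ] H) (hP : ∀ ψ : H, P ψ = ∫ s, U s ψ ∂μ) :
    ∀ a ∈ M, ∀ a' ∈ M.commutant,
      (P * a' * P) * (P * a * P) = (P * a * P) * (P * a' * P) := by
  intro a ha a' ha'
  have hstar (s : S) : star (U s) = U s⁻¹ := star_eq_map_inv_of_mem_unitary hU_mul hU_unitary s
  have exchange (s : S) : P * a * U s * a' * P = P * a' * U s⁻¹ * a * P := by
    obtain ⟨u, v, hu, hv, hu_unitary, -, hUs⟩ := hfac s
    rw [← hstar]
    refine mul_mul_mul_mul_eq_of_commute_conj (averaging_mul_eq_self hU_mul hP s) ?_ ?_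
    · rw [hstar, mul_averaging_eq_self hU_mul hU_cont hP]
    · rw [hUs]
      exact VonNeumannAlgebra.commute_conj_of_mem_commutant ha ha' hu hu_unitary hv
  have hPP (X : H →L[ℂ] H) : X * P * P = X * P := by
    rw [mul_assoc, averaging_mul_self hU_mul hU_cont hP]
  have key : P * a' * P * a * P = P * a * P * a' * P := by
    ext ψ
    have expand (b b' : H →L[ℂ] H) := apply_mul_averaging_mul hU_cont hP (P * b) (b' * P) ψ
    simp only [← mul_assoc] at expand
    rw [expand, expand]
    simp only [exchange]
    exact (integral_inv_eq_self (fun s => (P * a' * U s * a * P) ψ) μ).symm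
  simpa only [← mul_assoc, hPP] using key

/-- Under the factorization assumption, the compressed algebras of `M`
and of its commutant commute elementwise: for every `a ∈ M` and `a' ∈ M.commutant`,
`(P_S a' P_S)(P_S a P_S) = (P_S a P_S)(P_S a' P_S)`. -/
theorem compressed_algebras_commute
    {H : Type*} [NormedAddCommGroup H] [InnerProductSpace ℂ H] [CompleteSpace H]
    {S : Type*} [Group S] [TopologicalSpace S] [IsTopologicalGroup S]
    [CompactSpace S] [T2Space S] [MeasurableSpace S] [BorelSpace S]
    (μ : Measure S) [μ.IsHaarMeasure] [IsProbabilityMeasure μ]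
    [μ.IsMulRightInvariant] [μ.IsInvInvariant]
    (U : S → (H →L[ℂ] H))
    (hU_mul : ∀ s t : S, U (s * t) = U s * U t)
    (hU_unitary : ∀ s : S, U s ∈ unitary (H →L[ℂ] H))
    (hU_cont : ∀ ψ : H, Continuous fun s => U s ψ)
    (M : VonNeumannAlgebra H)
    (hfac : ∀ s : S, ∃ u v : H →L[ℂ] H, u ∈ M ∧ v ∈ M.commutant ∧
      u ∈ unitary (H →L[ℂ] H) ∧ v ∈ unitary (H →L[ℂ] H) ∧ U s = u * v)
    (P : H →L[ℂ] H) (hP : ∀ ψ : H, P ψ = ∫ s, U s ψ ∂μ) :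
    ∀ a ∈ M, ∀ a' ∈ M.commutant,
      (P * a' * P) * (P * a * P) = (P * a * P) * (P * a' * P) :=
  compressed_algebras_commute_general μ U hU_mul hU_unitary hU_cont M hfac P hP
end

section
/- Factorization of the group average over a product group: let O₁ and O₂ be bounded operators on H such that U(1, s₂, x) commutes with O₁ for all s₂ ∈ S₂ and x ∈ N, and U(s₁, 1, x) commutes with O₂ for all s₁ ∈ S₁ and x ∈ N. Then (O₁ O₂)_S = (O₁)_S (O₂)_S. -/
/-!
Write `t = (1, t₂, 1) * (t₁, 1, x)`. As `O₂` commutes with `U (t₁, 1, x)`, conjugating `O₂` by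
`U t` is the same as conjugating it by `U (1, t₂, 1)`, which commutes with `O₁`; hence
`U (s * (1, t₂, 1)) O₁ O₂ U (s * (1, t₂, 1))⁻¹ = U s O₁ (U t O₂ U t⁻¹) U s⁻¹`. Integrating over `t`
(right invariance turns the left side back into `(O₁ O₂)_S`) and then over `s` gives
`∫ U s O₁ (O₂)_S U s⁻¹ ds`, and `(O₂)_S` commutes with every `U s` by left invariance.
All integrands are continuous because a strongly continuous family of operators on a compact space
is uniformly bounded (Banach–Steinhaus), which also justifies Fubini.
-/

open MeasureTheory Filter Topology

section StronglyContinuous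

variable {X 𝕜 E F : Type*} [TopologicalSpace X] [NontriviallyNormedField 𝕜]
  [NormedAddCommGroup E] [NormedSpace 𝕜 E] [NormedAddCommGroup F] [NormedSpace 𝕜 F]

theorem Continuous.clm_apply_of_continuous_apply [CompactSpace X] [CompleteSpace E]
    {ρ : X → E →L[𝕜] F} (hρ : ∀ ψ, Continuous fun x => ρ x ψ) {f : X → E} (hf : Continuous f) :
    Continuous fun x => ρ x (f x) := by
  obtain ⟨C, hC⟩ : ∃ C, ∀ x, ‖ρ x‖ ≤ C := banach_steinhaus fun ψ => by
    simpa using isCompact_univ.exists_bound_of_continuousOn (hρ ψ).continuousOn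
  refine continuous_iff_continuousAt.2 fun x₀ => tendsto_iff_norm_sub_tendsto_zero.2 ?_
  have hlim : Tendsto (fun x => C * ‖f x - f x₀‖ + ‖ρ x (f x₀) - ρ x₀ (f x₀)‖) (𝓝 x₀) (𝓝 0) := by
    simpa using ((tendsto_iff_norm_sub_tendsto_zero.1 (hf.tendsto x₀)).const_mul C).add
      (tendsto_iff_norm_sub_tendsto_zero.1 ((hρ (f x₀)).tendsto x₀))
  refine squeeze_zero (fun _ => norm_nonneg _) (fun x => ?_) hlim
  calc ‖ρ x (f x) - ρ x₀ (f x₀)‖ = ‖ρ x (f x - f x₀) + (ρ x (f x₀) - ρ x₀ (f x₀))‖ := by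
        rw [map_sub, sub_add_sub_cancel]
    _ ≤ ‖ρ x (f x - f x₀)‖ + ‖ρ x (f x₀) - ρ x₀ (f x₀)‖ := norm_add_le _ _
    _ ≤ C * ‖f x - f x₀‖ + ‖ρ x (f x₀) - ρ x₀ (f x₀)‖ := by
        gcongr; exact (ρ x).le_of_opNorm_le (hC x) _

end StronglyContinuous

namespace MulHom

variable {G M : Type*} [Group G] [Semigroup M] (ρ : G →ₙ* M)

theorem conj_mul_of_commute {B : M} {k : G} (hk : Commute (ρ k) B) (g : G) :
    ρ (g * k) * B * ρ (g * k)⁻¹ = ρ g * B * ρ g⁻¹ := by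
  calc ρ (g * k) * B * ρ (g * k)⁻¹ = ρ g * (ρ k * B) * ρ (k⁻¹ * g⁻¹) := by
        rw [mul_inv_rev, map_mul, mul_assoc (ρ g)]
    _ = ρ g * B * ρ (k * (k⁻¹ * g⁻¹)) := by rw [hk.eq, map_mul ρ k, mul_assoc, mul_assoc, mul_assoc]
    _ = ρ g * B * ρ g⁻¹ := by rw [mul_inv_cancel_left]

end MulHom

section GroupAverage

variable {G H : Type*} [Group G] [TopologicalSpace G] [IsTopologicalGroup G] [CompactSpace G]
  [NormedAddCommGroup H] [NormedSpace ℂ H] [CompleteSpace H] {ρ : G →ₙ* (H →L[ℂ] H)}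

theorem continuous_conj_apply_s7 (hρ : ∀ ψ, Continuous fun g => ρ g ψ) (B : H →L[ℂ] H) (ψ : H) :
    Continuous fun g => ρ g (B (ρ g⁻¹ ψ)) :=
  Continuous.clm_apply_of_continuous_apply hρ (B.continuous.comp ((hρ ψ).comp continuous_inv))

variable [MeasurableSpace G] [BorelSpace G] (μ : Measure G)

variable (ρ) in
noncomputable def groupAverage (B : H →L[ℂ] H) (ψ : H) : H := ∫ g, ρ g (B (ρ g⁻¹ ψ)) ∂μ

theorem integrable_conj_apply_s7 [IsFiniteMeasure μ] (hρ : ∀ ψ, Continuous fun g => ρ g ψ)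
    (B : H →L[ℂ] H) (ψ : H) : Integrable (fun g => ρ g (B (ρ g⁻¹ ψ))) μ :=
  (continuous_conj_apply_s7 hρ B ψ).integrable_of_hasCompactSupport (.of_compactSpace _)

theorem groupAverage_map_apply [IsFiniteMeasure μ] [μ.IsMulLeftInvariant]
    (hρ : ∀ ψ, Continuous fun g => ρ g ψ) (B : H →L[ℂ] H) (v : G) (ψ : H) :
    groupAverage ρ μ B (ρ v ψ) = ρ v (groupAverage ρ μ B ψ) :=
  calc groupAverage ρ μ B (ρ v ψ) = ∫ g, ρ (v * g) (B (ρ (v * g)⁻¹ (ρ v ψ))) ∂μ :=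
        (integral_mul_left_eq_self _ v).symm
    _ = ∫ g, ρ v (ρ g (B (ρ g⁻¹ ψ))) ∂μ := by
        congr with g
        show ρ (v * g) (B ((ρ (v * g)⁻¹ * ρ v) ψ)) = _
        rw [← map_mul, mul_inv_rev, inv_mul_cancel_right, map_mul]
        rfl
    _ = ρ v (groupAverage ρ μ B ψ) := (ρ v).integral_comp_comm (integrable_conj_apply_s7 μ hρ B ψ)

theorem groupAverage_mul_apply [IsProbabilityMeasure μ] [μ.IsMulLeftInvariant]
    [μ.IsMulRightInvariant] (hρ : ∀ ψ, Continuous fun g => ρ g ψ) {B₁ B₂ : H →L[ℂ] H}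
    {σ : G → G} (hσ : Continuous σ) (h₁ : ∀ t, Commute (ρ (σ t)) B₁)
    (h₂ : ∀ t, ρ (σ t) * B₂ * ρ (σ t)⁻¹ = ρ t * B₂ * ρ t⁻¹) (ψ : H) :
    groupAverage ρ μ (B₁ * B₂) ψ = groupAverage ρ μ B₁ (groupAverage ρ μ B₂ ψ) := by
  set F : G → H := fun g => ρ g ((B₁ * B₂) (ρ g⁻¹ ψ))
  have hF : ∀ s t, F (s * σ t) = ρ s (B₁ (ρ t (B₂ (ρ t⁻¹ (ρ s⁻¹ ψ))))) := by
    intro s t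
    have : ρ (s * σ t) * (B₁ * B₂) * ρ (s * σ t)⁻¹ = ρ s * B₁ * (ρ t * B₂ * ρ t⁻¹) * ρ s⁻¹ := by
      rw [← h₂ t, mul_inv_rev, map_mul, map_mul]
      simp only [mul_assoc]
      rw [(h₁ t).left_comm]
    exact congr($this ψ)
  calc groupAverage ρ μ (B₁ * B₂) ψ = ∫ t, ∫ s, F (s * σ t) ∂μ ∂μ := by
        simp only [integral_mul_right_eq_self F, integral_const, probReal_univ, one_smul]; rfl
    _ = ∫ s, ∫ t, F (s * σ t) ∂μ ∂μ :=
        (integral_integral_swap_of_hasCompactSupport (f := fun s t => F (s * σ t))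
          ((continuous_conj_apply_s7 hρ _ ψ).comp (continuous_fst.mul (hσ.comp continuous_snd)))
          (.of_compactSpace _)).symm
    _ = ∫ s, ρ s (B₁ (groupAverage ρ μ B₂ (ρ s⁻¹ ψ))) ∂μ := by
        congr with s
        simp only [hF]
        rw [(ρ s).integral_comp_comm ((B₁.integrable_comp (integrable_conj_apply_s7 μ hρ _ _))),
          B₁.integral_comp_comm (integrable_conj_apply_s7 μ hρ _ _)]
        rfl
    _ = groupAverage ρ μ B₁ (groupAverage ρ μ B₂ ψ) := by
        simp only [groupAverage_map_apply μ hρ]; rfl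

end GroupAverage

theorem group_average_factorizes_general
    {H : Type*} [NormedAddCommGroup H] [InnerProductSpace ℂ H] [CompleteSpace H]
    {S₁ S₂ N : Type*}
    [Group S₁] [TopologicalSpace S₁] [IsTopologicalGroup S₁] [CompactSpace S₁]
    [Group S₂] [TopologicalSpace S₂] [IsTopologicalGroup S₂] [CompactSpace S₂]
    [Group N] [TopologicalSpace N] [IsTopologicalGroup N] [CompactSpace N]
    [MeasurableSpace (S₁ × S₂ × N)] [BorelSpace (S₁ × S₂ × N)]
    (μ : Measure (S₁ × S₂ × N)) [μ.IsHaarMeasure] [IsProbabilityMeasure μ]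
    [μ.IsMulRightInvariant]
    (U : S₁ × S₂ × N → (H →L[ℂ] H))
    (hU_mul : ∀ s t : S₁ × S₂ × N, U (s * t) = U s * U t)
    (hU_cont : ∀ ψ : H, Continuous fun s => U s ψ)
    (O₁ O₂ : H →L[ℂ] H)
    (hO₁ : ∀ (s₂ : S₂) (x : N), U (1, s₂, x) * O₁ = O₁ * U (1, s₂, x))
    (hO₂ : ∀ (s₁ : S₁) (x : N), U (s₁, 1, x) * O₂ = O₂ * U (s₁, 1, x))
    (A A₁ A₂ : H →L[ℂ] H)
    (hA : ∀ ψ : H, A ψ = ∫ s, U s ((O₁ * O₂) (U s⁻¹ ψ)) ∂μ)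
    (hA₁ : ∀ ψ : H, A₁ ψ = ∫ s, U s (O₁ (U s⁻¹ ψ)) ∂μ)
    (hA₂ : ∀ ψ : H, A₂ ψ = ∫ s, U s (O₂ (U s⁻¹ ψ)) ∂μ) :
    A = A₁ * A₂ := by
  let ρ : S₁ × S₂ × N →ₙ* (H →L[ℂ] H) := ⟨U, hU_mul⟩
  have hO₂_conj : ∀ t : S₁ × S₂ × N,
      ρ (1, t.2.1, 1) * O₂ * ρ (1, t.2.1, 1)⁻¹ = ρ t * O₂ * ρ t⁻¹ := fun t => by
    conv_rhs => rw [show t = (1, t.2.1, 1) * (t.1, 1, t.2.2) by simp]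
    exact (ρ.conj_mul_of_commute (hO₂ t.1 t.2.2) _).symm
  ext ψ
  show A ψ = A₁ (A₂ ψ)
  rw [hA, hA₂, hA₁]
  exact groupAverage_mul_apply μ (ρ := ρ) hU_cont (σ := fun t => (1, t.2.1, 1)) (by fun_prop)
    (fun t => hO₁ t.2.1 1) hO₂_conj ψ

/-- Factorization of the group average over a product group
`S = S₁ × S₂ × N`: if `U (1, s₂, x)` commutes with `O₁` for all `s₂, x`, and
`U (s₁, 1, x)` commutes with `O₂` for all `s₁, x`, then `(O₁ O₂)_S = (O₁)_S (O₂)_S`. -/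
theorem group_average_factorizes
    {H : Type*} [NormedAddCommGroup H] [InnerProductSpace ℂ H] [CompleteSpace H]
    {S₁ S₂ N : Type*}
    [Group S₁] [TopologicalSpace S₁] [IsTopologicalGroup S₁] [CompactSpace S₁] [T2Space S₁]
    [Group S₂] [TopologicalSpace S₂] [IsTopologicalGroup S₂] [CompactSpace S₂] [T2Space S₂]
    [Group N] [TopologicalSpace N] [IsTopologicalGroup N] [CompactSpace N] [T2Space N]
    [MeasurableSpace (S₁ × S₂ × N)] [BorelSpace (S₁ × S₂ × N)]
    (μ : Measure (S₁ × S₂ × N)) [μ.IsHaarMeasure] [IsProbabilityMeasure μ]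
    [μ.IsMulRightInvariant] [μ.IsInvInvariant]
    (U : S₁ × S₂ × N → (H →L[ℂ] H))
    (hU_mul : ∀ s t : S₁ × S₂ × N, U (s * t) = U s * U t)
    (hU_unitary : ∀ s : S₁ × S₂ × N, U s ∈ unitary (H →L[ℂ] H))
    (hU_cont : ∀ ψ : H, Continuous fun s => U s ψ)
    (O₁ O₂ : H →L[ℂ] H)
    (hO₁ : ∀ (s₂ : S₂) (x : N), U (1, s₂, x) * O₁ = O₁ * U (1, s₂, x))
    (hO₂ : ∀ (s₁ : S₁) (x : N), U (s₁, 1, x) * O₂ = O₂ * U (s₁, 1, x))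
    (A A₁ A₂ : H →L[ℂ] H)
    (hA : ∀ ψ : H, A ψ = ∫ s, U s ((O₁ * O₂) (U s⁻¹ ψ)) ∂μ)
    (hA₁ : ∀ ψ : H, A₁ ψ = ∫ s, U s (O₁ (U s⁻¹ ψ)) ∂μ)
    (hA₂ : ∀ ψ : H, A₂ ψ = ∫ s, U s (O₂ (U s⁻¹ ψ)) ∂μ) :
    A = A₁ * A₂ :=
  group_average_factorizes_general μ U hU_mul hU_cont O₁ O₂ hO₁ hO₂ A A₁ A₂ hA hA₁ hA₂
end

section
/- Factorization of the compressed product over a product group: let O₁ and O₂ be bounded operators on H such that U(1, s₂, x) commutes with O₁ for all s₂ ∈ S₂ and x ∈ N, and U(s₁, 1, x) commutes with O₂ for all s₁ ∈ S₁ and x ∈ N. Then P_S (O₁ O₂) P_S = (P_S O₁ P_S)(P_S O₂ P_S). -/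
open MeasureTheory

/-!
Left and right invariance of the Haar measure give `U t * P = P = P * U t`, hence `P * P = P`.
Writing the middle `P` of `P O₁ P O₂ P` as an average turns it into the average of
`P O₁ U(s) O₂ P` over `s`. Splitting `s = (1, s₂, 1) * (s₁, 1, x)`, the first factor commutes
past `O₁` and is absorbed by the left `P`, the second commutes past `O₂` and is absorbed by the
right `P`, so every term of the average equals `P O₁ O₂ P`.
-/

theorem mul_mul_mul_mul_mul_eq_of_commute {M : Type*} [Monoid M] {p a b v w : M}
    (hva : Commute v a) (hwb : Commute w b) (hpv : p * v = p) (hwp : w * p = p) :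
    p * a * (v * w) * b * p = p * a * b * p :=
  calc p * a * (v * w) * b * p = p * (a * v) * ((w * b) * p) := by simp only [mul_assoc]
    _ = (p * v) * a * (b * (w * p)) := by rw [← hva.eq, hwb.eq]; simp only [mul_assoc]
    _ = p * a * b * p := by rw [hpv, hwp]; simp only [mul_assoc]

section GroupAverage

variable {G E : Type*} [MeasurableSpace G] [NormedAddCommGroup E] [NormedSpace ℂ E]
  {μ : Measure G} {U : G → E →L[ℂ] E} {P : E →L[ℂ] E}

theorem mul_average_mul_eq [CompleteSpace E] [IsProbabilityMeasure μ]
    (hP : ∀ ψ, P ψ = ∫ s, U s ψ ∂μ) (hInt : ∀ ψ, Integrable (fun s => U s ψ) μ)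
    {A B C : E →L[ℂ] E} (h : ∀ s, A * U s * B = C) : A * P * B = C := by
  ext ψ
  calc A (P (B ψ)) = ∫ s, A (U s (B ψ)) ∂μ := by
        rw [hP, ← A.integral_comp_comm (hInt _)]
    _ = ∫ _, C ψ ∂μ := by congr 1 with s; rw [← h s]; rfl
    _ = C ψ := by simp

variable [Group G] [MeasurableMul G] (hU_mul : ∀ s t, U (s * t) = U s * U t)
  (hP : ∀ ψ, P ψ = ∫ s, U s ψ ∂μ)
include hU_mul hP

theorem average_mul_eq_average [μ.IsMulRightInvariant] (t : G) : P * U t = P := by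
  ext ψ
  calc P (U t ψ) = ∫ s, U (s * t) ψ ∂μ := by simp only [hP, hU_mul]; rfl
    _ = P ψ := by rw [integral_mul_right_eq_self (fun s => U s ψ) t, hP]

theorem mul_average_eq_average [CompleteSpace E] [μ.IsMulLeftInvariant]
    (hInt : ∀ ψ, Integrable (fun s => U s ψ) μ) (t : G) : U t * P = P := by
  ext ψ
  calc U t (P ψ) = ∫ s, U (t * s) ψ ∂μ := by
        rw [hP, ← (U t).integral_comp_comm (hInt ψ)]; simp only [hU_mul]; rfl
    _ = P ψ := by rw [integral_mul_left_eq_self (fun s => U s ψ) t, hP]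

theorem isIdempotentElem_average [CompleteSpace E] [IsProbabilityMeasure μ]
    [μ.IsMulRightInvariant] (hInt : ∀ ψ, Integrable (fun s => U s ψ) μ) :
    IsIdempotentElem P := by
  simpa [IsIdempotentElem] using
    mul_average_mul_eq (B := 1) hP hInt (average_mul_eq_average hU_mul hP)

end GroupAverage

theorem compressed_product_factorizes_general
    {H : Type*} [NormedAddCommGroup H] [InnerProductSpace ℂ H] [CompleteSpace H]
    {S₁ S₂ N : Type*}
    [Group S₁] [TopologicalSpace S₁] [IsTopologicalGroup S₁] [CompactSpace S₁]
    [Group S₂] [TopologicalSpace S₂] [IsTopologicalGroup S₂] [CompactSpace S₂]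
    [Group N] [TopologicalSpace N] [IsTopologicalGroup N] [CompactSpace N]
    [MeasurableSpace (S₁ × S₂ × N)] [BorelSpace (S₁ × S₂ × N)]
    (μ : Measure (S₁ × S₂ × N)) [μ.IsHaarMeasure] [IsProbabilityMeasure μ]
    [μ.IsMulRightInvariant]
    (U : S₁ × S₂ × N → (H →L[ℂ] H))
    (hU_mul : ∀ s t : S₁ × S₂ × N, U (s * t) = U s * U t)
    (hU_cont : ∀ ψ : H, Continuous fun s => U s ψ)
    (O₁ O₂ : H →L[ℂ] H)
    (hO₁ : ∀ (s₂ : S₂) (x : N), U (1, s₂, x) * O₁ = O₁ * U (1, s₂, x))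
    (hO₂ : ∀ (s₁ : S₁) (x : N), U (s₁, 1, x) * O₂ = O₂ * U (s₁, 1, x))
    (P : H →L[ℂ] H) (hP : ∀ ψ : H, P ψ = ∫ s, U s ψ ∂μ) :
    P * (O₁ * O₂) * P = (P * O₁ * P) * (P * O₂ * P) := by
  have hInt : ∀ ψ, Integrable (fun s => U s ψ) μ := fun ψ =>
    (hU_cont ψ).integrable_of_hasCompactSupport (HasCompactSupport.of_compactSpace _)
  have hPP : IsIdempotentElem P := isIdempotentElem_average hU_mul hP hInt
  have hterm : ∀ s, P * O₁ * U s * (O₂ * P) = P * (O₁ * O₂) * P := by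
    rintro ⟨s₁, s₂, x⟩
    have hsplit : ((s₁, s₂, x) : S₁ × S₂ × N) = (1, s₂, 1) * (s₁, 1, x) := by simp
    rw [hsplit, hU_mul, ← mul_assoc,
      mul_mul_mul_mul_mul_eq_of_commute (hO₁ s₂ 1) (hO₂ s₁ x)
        (average_mul_eq_average hU_mul hP _) (mul_average_eq_average hU_mul hP hInt _)]
    simp only [mul_assoc]
  calc P * (O₁ * O₂) * P = P * O₁ * P * (O₂ * P) := (mul_average_mul_eq hP hInt hterm).symm
    _ = P * O₁ * (P * P) * (O₂ * P) := by rw [hPP.eq]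
    _ = P * O₁ * P * (P * O₂ * P) := by simp only [mul_assoc]

/-- Factorization of the compressed product over a product group
`S = S₁ × S₂ × N`: under the same commutation hypotheses as for the factorization
of the group average, `P_S (O₁ O₂) P_S = (P_S O₁ P_S)(P_S O₂ P_S)`. -/
theorem compressed_product_factorizes
    {H : Type*} [NormedAddCommGroup H] [InnerProductSpace ℂ H] [CompleteSpace H]
    {S₁ S₂ N : Type*}
    [Group S₁] [TopologicalSpace S₁] [IsTopologicalGroup S₁] [CompactSpace S₁] [T2Space S₁]
    [Group S₂] [TopologicalSpace S₂] [IsTopologicalGroup S₂] [CompactSpace S₂] [T2Space S₂]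
    [Group N] [TopologicalSpace N] [IsTopologicalGroup N] [CompactSpace N] [T2Space N]
    [MeasurableSpace (S₁ × S₂ × N)] [BorelSpace (S₁ × S₂ × N)]
    (μ : Measure (S₁ × S₂ × N)) [μ.IsHaarMeasure] [IsProbabilityMeasure μ]
    [μ.IsMulRightInvariant] [μ.IsInvInvariant]
    (U : S₁ × S₂ × N → (H →L[ℂ] H))
    (hU_mul : ∀ s t : S₁ × S₂ × N, U (s * t) = U s * U t)
    (hU_unitary : ∀ s : S₁ × S₂ × N, U s ∈ unitary (H →L[ℂ] H))
    (hU_cont : ∀ ψ : H, Continuous fun s => U s ψ)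
    (O₁ O₂ : H →L[ℂ] H)
    (hO₁ : ∀ (s₂ : S₂) (x : N), U (1, s₂, x) * O₁ = O₁ * U (1, s₂, x))
    (hO₂ : ∀ (s₁ : S₁) (x : N), U (s₁, 1, x) * O₂ = O₂ * U (s₁, 1, x))
    (P : H →L[ℂ] H) (hP : ∀ ψ : H, P ψ = ∫ s, U s ψ ∂μ) :
    P * (O₁ * O₂) * P = (P * O₁ * P) * (P * O₂ * P) :=
  compressed_product_factorizes_general μ U hU_mul hU_cont O₁ O₂ hO₁ hO₂ P hP
end

section
/- Disjoint additivity for lattice systems with a product constraint group: let M₁ and M₂ be von Neumann algebras on H such that every element of M₁ commutes with every element of M₂, and suppose that U(s₁,1,1) commutes with every element of M₂, U(1,s₂,1) commutes with every element of M₁, and U(1,1,x) commutes with every element of M₁ and of M₂, for all s₁ ∈ S₁, s₂ ∈ S₂, x ∈ N. Let K = H_S be the range of P_S and let c denote compression to K. Then, within the bounded operators on K, the double commutant of {c(T) : T ∈ (M₁ ∪ M₂)''} equals the double commutant of {c(a) : a ∈ M₁} ∪ {c(b) : b ∈ M₂}, where (M₁ ∪ M₂)'' denotes the double commutant of M₁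 ∪ M₂ in B(H). -/
/-!
Let `K₁` and `K₂` be the spaces of vectors fixed by `1 × S₂ × N` and by `S₁ × 1 × N`. Then
`K = K₁ ⊓ K₂`, `M₁` preserves `K₁` and `M₂` preserves `K₂`. As `1 × S₂ × N` is normal, the
projection onto `K₁` commutes with every `U s`, hence preserves `K₂`; so a vector of `K₂`
orthogonal to `K` is orthogonal to `K₁`, which gives `c (a * b) = c a * c b` for `a ∈ M₁`,
`b ∈ M₂`. An operator `y` commuting with `c(M₁) ∪ c(M₂)` therefore commutes with the compression
of the star algebra `B` spanned by these products, and, by the von Neumann density theorem for the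
two vectors `ψ` and `y ψ`, with the compression of `B''`, which contains `(M₁ ∪ M₂)''`.
-/

open MeasureTheory

namespace StarSubalgebra

variable {R A : Type*} [CommSemiring R] [StarRing R] [Semiring A] [StarRing A] [Algebra R A]
  [StarModule R A]

def mulOfCommute (A₁ A₂ : StarSubalgebra R A) (h : ∀ a ∈ A₁, ∀ b ∈ A₂, Commute a b) :
    StarSubalgebra R A where
  toSubalgebra := (A₁.toSubalgebra.toSubmodule * A₂.toSubalgebra.toSubmodule).toSubalgebra
    (one_mul (1 : A) ▸ Submodule.mul_mem_mul A₁.one_mem A₂.one_mem)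
    (fun x y hx hy => by
      set P := A₁.toSubalgebra.toSubmodule
      set Q := A₂.toSubalgebra.toSubmodule
      have hPQ : P * Q * (P * Q) = P * Q := calc
        P * Q * (P * Q) = P * (Q * P) * Q := by simp only [mul_assoc]
        _ = P * P * (Q * Q) := by
          rw [← Submodule.mul_comm_of_commute (M := P) (N := Q) h]; simp only [mul_assoc]
        _ = P * Q := by
          rw [(Subalgebra.isIdempotentElem_toSubmodule _).eq,
            (Subalgebra.isIdempotentElem_toSubmodule _).eq]
      exact hPQ ▸ Submodule.mul_mem_mul hx hy)
  star_mem' {x} hx := by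
    refine Submodule.mul_induction_on hx (fun a ha b hb => ?_) fun x y hx hy => ?_
    · have ha' : star a ∈ A₁ := star_mem (show a ∈ A₁ from ha)
      have hb' : star b ∈ A₂ := star_mem (show b ∈ A₂ from hb)
      rw [star_mul, ← (h _ ha' _ hb').eq]
      exact Submodule.mul_mem_mul ha' hb'
    · simpa using add_mem hx hy

variable {A₁ A₂ : StarSubalgebra R A} {h : ∀ a ∈ A₁, ∀ b ∈ A₂, Commute a b}

lemma union_subset_mulOfCommute : (A₁ ∪ A₂ : Set A) ⊆ mulOfCommute A₁ A₂ h := by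
  rintro x (hx | hx)
  · exact mul_one x ▸ Submodule.mul_mem_mul (N := A₂.toSubalgebra.toSubmodule) hx A₂.one_mem
  · exact one_mul x ▸ Submodule.mul_mem_mul (M := A₁.toSubalgebra.toSubmodule) A₁.one_mem hx

theorem centralizer_image_subset_centralizer_image_mulOfCommute {B F : Type*} [Semiring B]
    [Algebra R B] [FunLike F A B] [LinearMapClass F R A B] {f : F}
    (hf : ∀ a ∈ A₁, ∀ b ∈ A₂, f (a * b) = f a * f b) :
    Set.centralizer (f '' (A₁ ∪ A₂ : Set A)) ⊆ Set.centralizer (f '' mulOfCommute A₁ A₂ h) := by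
  rintro x hx _ ⟨w, hw, rfl⟩
  have hcomm : ∀ a ∈ (A₁ ∪ A₂ : Set A), Commute (f a) x := fun a ha => hx _ ⟨a, ha, rfl⟩
  refine (Submodule.mul_induction_on (C := fun w => Commute (f w) x) hw
    (fun a ha b hb => ?_) fun y z hy hz => ?_).eq
  · rw [hf a ha b hb]
    exact (hcomm a (.inl ha)).mul_left (hcomm b (.inr hb))
  · rw [map_add]
    exact hy.add_left hz

end StarSubalgebra

section HilbertSpace

open ContinuousLinearMap Set

variable {𝕜 E : Type*} [RCLike 𝕜] [NormedAddCommGroup E] [InnerProductSpace 𝕜 E]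

theorem Submodule.commute_starProjection_of_mapsTo [CompleteSpace E] (K : Submodule 𝕜 E)
    [K.HasOrthogonalProjection] {A : E →L[𝕜] E} (hA : ∀ v ∈ K, A v ∈ K)
    (hA' : ∀ v ∈ K, adjoint A v ∈ K) :
    Commute K.starProjection A := by
  rw [K.isIdempotentElem_starProjection.commute_iff, K.range_starProjection, K.ker_starProjection]
  exact ⟨(Module.End.mem_invtSubmodule_iff_forall_mem_of_mem _).2 hA,
    orthogonal_mem_invtSubmodule ((Module.End.mem_invtSubmodule_iff_forall_mem_of_mem _).2 hA')⟩

section Density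

variable [CompleteSpace E]

theorem StarSubalgebra.apply_mem_closure_orbit (A : StarSubalgebra 𝕜 (E →L[𝕜] E))
    {T : E →L[𝕜] E} (hT : T ∈ Set.centralizer (Set.centralizer (A : Set (E →L[𝕜] E))))
    (ξ : E) :
    T ξ ∈ closure ((fun w : E →L[𝕜] E => w ξ) '' A) := by
  set L := (A.toSubalgebra.toSubmodule.map (apply 𝕜 E ξ : (E →L[𝕜] E) →ₗ[𝕜] E)).topologicalClosure
  have hL : (L : Set E) = closure ((fun w : E →L[𝕜] E => w ξ) '' A) := by
    rw [Submodule.topologicalClosure_coe, Submodule.map_coe]; rfl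
  have hLc : IsClosed (L : Set E) := Submodule.isClosed_topologicalClosure _
  have : L.HasOrthogonalProjection := have := hLc.completeSpace_coe; inferInstance
  have hA : ∀ w ∈ A, ∀ v ∈ L, w v ∈ L := by
    intro w hw
    refine Submodule.topologicalClosure_minimal (t := L.comap (w : E →ₗ[𝕜] E)) _ ?_
      (hLc.preimage w.continuous)
    rintro _ ⟨u, hu, rfl⟩
    exact Submodule.le_topologicalClosure _ ⟨w * u, A.mul_mem hw hu, rfl⟩
  have hP : L.starProjection ∈ Set.centralizer (A : Set (E →L[𝕜] E)) := fun w hw =>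
    (L.commute_starProjection_of_mapsTo (hA w hw) fun v hv => by
      simpa [← star_eq_adjoint] using hA (star w) (star_mem hw) v hv).eq.symm
  have hξ : ξ ∈ L := Submodule.le_topologicalClosure _ ⟨1, A.one_mem, rfl⟩
  rw [← hL, SetLike.mem_coe, ← L.starProjection_eq_self_iff.2 hξ, ← mul_apply_eq_comp,
    ← hT _ hP]
  exact L.starProjection_apply_mem _

namespace ContinuousLinearMap

variable (𝕜 E) (ι : Type*) [Fintype ι]

noncomputable def ampliation :
    (E →L[𝕜] E) →⋆ₐ[𝕜] (PiLp 2 (fun _ : ι => E) →L[𝕜] PiLp 2 (fun _ : ι => E)) where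
  toFun w := (PiLp.continuousLinearEquiv 2 𝕜 _).symm.toContinuousLinearMap ∘L
    (piMap fun _ => w) ∘L (PiLp.continuousLinearEquiv 2 𝕜 _).toContinuousLinearMap
  map_one' := rfl
  map_mul' _ _ := rfl
  map_zero' := rfl
  map_add' _ _ := rfl
  commutes' r := by ext; rfl
  map_star' w := by
    rw [star_eq_adjoint]
    refine (eq_adjoint_iff _ _).2 fun x y => ?_
    simp [PiLp.inner_apply, adjoint_inner_left]

variable {𝕜 E ι}

@[simp]
lemma ampliation_apply (w : E →L[𝕜] E) (v : PiLp 2 (fun _ : ι => E)) (i : ι) :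
    ampliation 𝕜 E ι w v i = w (v i) := rfl

lemma ampliation_single [DecidableEq ι] (w : E →L[𝕜] E) (j : ι) (u : E) :
    ampliation 𝕜 E ι w (PiLp.single 2 j u) = PiLp.single 2 j (w u) := by
  ext i; by_cases h : i = j <;> simp [h]

/-- The commutant of the ampliation of `S` consists of the `ι × ι` operator matrices with entries
in the commutant of `S`, and these commute with the ampliation of anything in `S''`. -/
theorem ampliation_mem_centralizer_centralizer {S : Set (E →L[𝕜] E)} {T : E →L[𝕜] E}
    (hT : T ∈ Set.centralizer (Set.centralizer S)) :
    ampliation 𝕜 E ι T ∈ Set.centralizer (Set.centralizer (ampliation 𝕜 E ι '' S)) := by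
  classical
  intro Y hY
  let entry (i j : ι) : E →L[𝕜] E := PiLp.proj 2 (fun _ => E) i ∘L Y ∘L
    (PiLp.continuousLinearEquiv 2 𝕜 _).symm.toContinuousLinearMap ∘L single 𝕜 (fun _ => E) j
  have entry_apply (i j : ι) (u : E) : entry i j u = Y (PiLp.single 2 j u) i := rfl
  have entry_mem (i j : ι) : entry i j ∈ Set.centralizer S := by
    intro w hw
    ext u
    simpa [entry_apply, ampliation_single] using
      congr($(hY _ ⟨w, hw, rfl⟩) (PiLp.single 2 j u) i)
  have decompose (v : PiLp 2 (fun _ : ι => E)) (i : ι) : Y v i = ∑ j, entry i j (v j) := by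
    conv_lhs => rw [show v = ∑ j, PiLp.single 2 j (v j) by ext; simp]
    simp [entry_apply]
  ext v i
  calc Y (ampliation 𝕜 E ι T v) i = ∑ j, entry i j (T (v j)) := by simp [decompose]
    _ = ∑ j, T (entry i j (v j)) := by
      simp only [← mul_apply_eq_comp, hT _ (entry_mem _ _)]
    _ = T (Y v i) := by simp [decompose]

end ContinuousLinearMap

/-- The von Neumann density theorem, for finitely many vectors. -/
theorem StarSubalgebra.pi_apply_mem_closure_orbit {ι : Type*} [Fintype ι]
    (A : StarSubalgebra 𝕜 (E →L[𝕜] E)) {T : E →L[𝕜] E}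
    (hT : T ∈ Set.centralizer (Set.centralizer (A : Set (E →L[𝕜] E)))) (ξ : ι → E) :
    (fun i => T (ξ i)) ∈ closure ((fun (w : E →L[𝕜] E) i => w (ξ i)) '' A) := by
  have hTamp := (A.map (ampliation 𝕜 E ι)).apply_mem_closure_orbit
    (by simpa using ampliation_mem_centralizer_centralizer hT) (WithLp.toLp 2 ξ)
  have := image_closure_subset_closure_image (PiLp.continuous_ofLp 2 _) ⟨_, hTamp, rfl⟩
  rw [Set.image_image, StarSubalgebra.coe_map, Set.image_image] at this
  exact this

end Density

namespace Submodule

noncomputable def compression (K : Submodule 𝕜 E) [K.HasOrthogonalProjection] :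
    (E →L[𝕜] E) →L[𝕜] (K →L[𝕜] K) :=
  (compL 𝕜 K E K K.orthogonalProjectionOnto).comp ((compL 𝕜 K E E).flip K.subtypeL)

@[simp]
lemma compression_apply (K : Submodule 𝕜 E) [K.HasOrthogonalProjection] (a : E →L[𝕜] E)
    (ψ : K) : K.compression a ψ = K.orthogonalProjectionOnto (a ψ) := rfl

theorem centralizer_compression_image_subset [CompleteSpace E] (K : Submodule 𝕜 E)
    [K.HasOrthogonalProjection] (A : StarSubalgebra 𝕜 (E →L[𝕜] E)) :
    centralizer (K.compression '' A) ⊆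
      centralizer (K.compression '' centralizer (centralizer (A : Set (E →L[𝕜] E)))) := by
  rintro x hx _ ⟨T, hT, rfl⟩
  ext1 ψ
  let Z : Set (Fin 2 → E) :=
    {f | K.orthogonalProjectionOnto (f 1) = x (K.orthogonalProjectionOnto (f 0))}
  have hZ : IsClosed Z := isClosed_eq (by fun_prop) (by fun_prop)
  have horbit : (fun (w : E →L[𝕜] E) i => w (![(ψ : E), (x ψ : E)] i)) '' A ⊆ Z := by
    rintro _ ⟨w, hw, rfl⟩
    simpa [Z] using congr($(hx _ ⟨w, hw, rfl⟩) ψ)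
  simpa [Z] using closure_minimal horbit hZ (A.pi_apply_mem_closure_orbit hT ![(ψ : E), x ψ])

variable {K₁ K₂ : Submodule 𝕜 E} [K₁.HasOrthogonalProjection]

theorem mem_orthogonal_of_starProjection_mapsTo (hK : ∀ v ∈ K₂, K₁.starProjection v ∈ K₂)
    {q : E} (hq₂ : q ∈ K₂) (hq : q ∈ (K₁ ⊓ K₂)ᗮ) : q ∈ K₁ᗮ := by
  have h₀ : inner 𝕜 (K₁.starProjection q) q = 0 :=
    (mem_orthogonal _ _).1 hq _ ⟨K₁.starProjection_apply_mem q, hK q hq₂⟩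
  have := K₁.re_inner_starProjection_eq_normSq q
  rw [h₀, map_zero, eq_comm, sq_eq_zero_iff, norm_eq_zero] at this
  exact K₁.orthogonalProjectionOnto_eq_zero_iff.1 this

variable [CompleteSpace E] [(K₁ ⊓ K₂).HasOrthogonalProjection]

theorem compression_mul_of_starProjection_mapsTo (hK : ∀ v ∈ K₂, K₁.starProjection v ∈ K₂)
    {a b : E →L[𝕜] E} (ha : ∀ v ∈ K₁, adjoint a v ∈ K₁) (hb : ∀ v ∈ K₂, b v ∈ K₂) :
    (K₁ ⊓ K₂).compression (a * b) = (K₁ ⊓ K₂).compression a * (K₁ ⊓ K₂).compression b := by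
  ext1 ξ
  have hq : b ξ - (K₁ ⊓ K₂).starProjection (b ξ) ∈ K₁ᗮ :=
    mem_orthogonal_of_starProjection_mapsTo hK
      (K₂.sub_mem (hb _ ξ.2.2) ((K₁ ⊓ K₂).starProjection_apply_mem _).2)
      ((K₁ ⊓ K₂).sub_starProjection_mem_orthogonal _)
  have ha' : ∀ v ∈ K₁ᗮ, a v ∈ K₁ᗮ := (Module.End.mem_invtSubmodule_iff_forall_mem_of_mem _).1
    (orthogonal_mem_invtSubmodule ((Module.End.mem_invtSubmodule_iff_forall_mem_of_mem _).2 ha))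
  have haq := (K₁ ⊓ K₂).orthogonalProjectionOnto_eq_zero_iff.2
    (orthogonal_le inf_le_left (ha' _ hq))
  rw [map_sub, map_sub, sub_eq_zero] at haq
  exact haq

theorem centralizer_centralizer_compression_image_eq (hK : ∀ v ∈ K₂, K₁.starProjection v ∈ K₂)
    {A₁ A₂ : StarSubalgebra 𝕜 (E →L[𝕜] E)} (hA : ∀ a ∈ A₁, ∀ b ∈ A₂, Commute a b)
    (hA₁ : ∀ a ∈ A₁, ∀ v ∈ K₁, a v ∈ K₁) (hA₂ : ∀ b ∈ A₂, ∀ v ∈ K₂, b v ∈ K₂) :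
    centralizer (centralizer ((K₁ ⊓ K₂).compression ''
        centralizer (centralizer (A₁ ∪ A₂ : Set (E →L[𝕜] E))))) =
      centralizer (centralizer ((K₁ ⊓ K₂).compression '' A₁ ∪ (K₁ ⊓ K₂).compression '' A₂)) := by
  set c := (K₁ ⊓ K₂).compression
  have hc (a) (ha : a ∈ A₁) (b) (hb : b ∈ A₂) : c (a * b) = c a * c b :=
    compression_mul_of_starProjection_mapsTo hK
      (fun v => hA₁ _ (by simpa [star_eq_adjoint] using star_mem ha) v) (hA₂ b hb)
  let B := StarSubalgebra.mulOfCommute A₁ A₂ hA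
  rw [← image_union]
  refine Subset.antisymm (centralizer_subset ?_)
    (centralizer_subset (centralizer_subset (image_mono subset_centralizer_centralizer)))
  calc centralizer (c '' (A₁ ∪ A₂ : Set (E →L[𝕜] E)))
      ⊆ centralizer (c '' B) :=
        StarSubalgebra.centralizer_image_subset_centralizer_image_mulOfCommute hc
    _ ⊆ centralizer (c '' centralizer (centralizer (B : Set (E →L[𝕜] E)))) :=
        (K₁ ⊓ K₂).centralizer_compression_image_subset B
    _ ⊆ _ := centralizer_subset (image_mono (centralizer_subset (centralizer_subset
        StarSubalgebra.union_subset_mulOfCommute)))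

end Submodule

namespace MonoidHom

variable [CompleteSpace E] {G : Type*} [Group G] (U : G →* unitary (E →L[𝕜] E))

def fixedSubspace (N : Subgroup G) : Submodule 𝕜 E where
  carrier := {ψ | ∀ g ∈ N, (U g : E →L[𝕜] E) ψ = ψ}
  zero_mem' _ _ := map_zero _
  add_mem' hψ hφ g hg := by simp_all
  smul_mem' r ψ hψ g hg := by simp_all

variable {U}

lemma mem_fixedSubspace {N : Subgroup G} {ψ : E} :
    ψ ∈ U.fixedSubspace N ↔ ∀ g ∈ N, (U g : E →L[𝕜] E) ψ = ψ := Iff.rfl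

lemma fixedSubspace_sup (N₁ N₂ : Subgroup G) :
    U.fixedSubspace (N₁ ⊔ N₂) = U.fixedSubspace N₁ ⊓ U.fixedSubspace N₂ := by
  ext ψ
  have (N : Subgroup G) : ψ ∈ U.fixedSubspace N ↔
      N ≤ (MulAction.stabilizer (unitary (E →L[𝕜] E)) ψ).comap U := Iff.rfl
  simp only [Submodule.mem_inf, this, sup_le_iff]

lemma isClosed_fixedSubspace (N : Subgroup G) : IsClosed (U.fixedSubspace N : Set E) := by
  have : (U.fixedSubspace N : Set E) = ⋂ g ∈ N, {ψ | (U g : E →L[𝕜] E) ψ = ψ} := by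
    ext; simp [mem_fixedSubspace]
  exact this ▸ isClosed_biInter fun g _ => isClosed_eq (U g : E →L[𝕜] E).continuous continuous_id

instance (N : Subgroup G) : (U.fixedSubspace N).HasOrthogonalProjection :=
  have := (isClosed_fixedSubspace (U := U) N).completeSpace_coe
  inferInstance

lemma apply_mem_fixedSubspace_of_commute {N : Subgroup G} {a : E →L[𝕜] E}
    (ha : ∀ g ∈ N, Commute (U g : E →L[𝕜] E) a) {ψ : E} (hψ : ψ ∈ U.fixedSubspace N) :
    a ψ ∈ U.fixedSubspace N := fun g hg => by
  rw [← mul_apply_eq_comp, (ha g hg).eq, mul_apply_eq_comp, hψ g hg]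

lemma apply_mem_fixedSubspace_of_normal {N : Subgroup G} [N.Normal] (g : G) {ψ : E}
    (hψ : ψ ∈ U.fixedSubspace N) : (U g : E →L[𝕜] E) ψ ∈ U.fixedSubspace N := fun n hn => by
  have hconj : g⁻¹ * n * g ∈ N := by simpa using Subgroup.Normal.conj_mem ‹_› n hn g⁻¹
  have hmul (a b : G) (v : E) :
      (U (a * b) : E →L[𝕜] E) v = (U a : E →L[𝕜] E) ((U b : E →L[𝕜] E) v) := by
    simp [mul_apply_eq_comp]
  rw [← hmul, show n * g = g * (g⁻¹ * n * g) by group, hmul, hψ _ hconj]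

lemma starProjection_mem_fixedSubspace (N : Subgroup G) [N.Normal] {N' : Subgroup G} {ψ : E}
    (hψ : ψ ∈ U.fixedSubspace N') :
    (U.fixedSubspace N).starProjection ψ ∈ U.fixedSubspace N' := by
  intro g hg
  have hcomm : Commute (U.fixedSubspace N).starProjection (U g : E →L[𝕜] E) := by
    refine (U.fixedSubspace N).commute_starProjection_of_mapsTo
      (fun _ => apply_mem_fixedSubspace_of_normal g) fun _ hv => ?_
    rw [← star_eq_adjoint, ← Unitary.coe_star, Unitary.star_eq_inv, ← map_inv]
    exact apply_mem_fixedSubspace_of_normal g⁻¹ hv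
  rw [← mul_apply_eq_comp, ← hcomm.eq, mul_apply_eq_comp, hψ g hg]

end MonoidHom

end HilbertSpace

theorem disjoint_additivity_lattice_general
    {H : Type*} [NormedAddCommGroup H] [InnerProductSpace ℂ H] [CompleteSpace H]
    {S₁ S₂ N : Type*}
    [Group S₁]
    [Group S₂]
    [Group N]
    (U : S₁ × S₂ × N → (H →L[ℂ] H))
    (hU_mul : ∀ s t : S₁ × S₂ × N, U (s * t) = U s * U t)
    (hU_unitary : ∀ s : S₁ × S₂ × N, U s ∈ unitary (H →L[ℂ] H))
    (M₁ M₂ : VonNeumannAlgebra H)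
    (hM₁₂ : ∀ a ∈ M₁, ∀ b ∈ M₂, a * b = b * a)
    (hUM₂ : ∀ (s₁ : S₁), ∀ b ∈ M₂, U (s₁, 1, 1) * b = b * U (s₁, 1, 1))
    (hUM₁ : ∀ (s₂ : S₂), ∀ a ∈ M₁, U (1, s₂, 1) * a = a * U (1, s₂, 1))
    (hUN : ∀ (x : N), (∀ a ∈ M₁, U (1, 1, x) * a = a * U (1, 1, x)) ∧
      (∀ b ∈ M₂, U (1, 1, x) * b = b * U (1, 1, x)))
    (K : Submodule ℂ H) [K.HasOrthogonalProjection]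
    (hK : (K : Set H) = {ψ : H | ∀ s : S₁ × S₂ × N, U s ψ = ψ})
    (c : (H →L[ℂ] H) → (K →L[ℂ] K))
    (hc : ∀ (a : H →L[ℂ] H) (ψ : K), c a ψ = K.orthogonalProjectionOnto (a ψ)) :
    Set.centralizer (Set.centralizer
        (c '' (Set.centralizer (Set.centralizer ((M₁ : Set (H →L[ℂ] H)) ∪ (M₂ : Set (H →L[ℂ] H))))))) =
      Set.centralizer (Set.centralizer
        ((c '' (M₁ : Set (H →L[ℂ] H))) ∪ (c '' (M₂ : Set (H →L[ℂ] H))))) := by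
  let V : S₁ × S₂ × N →* unitary (H →L[ℂ] H) :=
    MonoidHom.mk' (fun s => ⟨U s, hU_unitary s⟩) fun s t => Subtype.ext (hU_mul s t)
  -- `N₁ = 1 × S₂ × N` and `N₂ = S₁ × 1 × N`
  let N₁ := (MonoidHom.fst S₁ (S₂ × N)).ker
  let N₂ := ((MonoidHom.fst S₂ N).comp (MonoidHom.snd S₁ (S₂ × N))).ker
  have hN : N₁ ⊔ N₂ = ⊤ := eq_top_iff.2 fun ⟨s₁, s₂, x⟩ _ => by
    simpa using Subgroup.mul_mem_sup (S := N₁) (T := N₂) (x := (1, s₂, x)) (y := (s₁, 1, 1))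
      (by simp [N₁, Subgroup.mem_prod]) (by simp [N₂])
  obtain rfl : K = V.fixedSubspace N₁ ⊓ V.fixedSubspace N₂ := by
    rw [← MonoidHom.fixedSubspace_sup, hN]
    exact SetLike.coe_injective (hK.trans (by ext; simp [MonoidHom.mem_fixedSubspace, V]))
  obtain rfl : c = Submodule.compression _ := funext fun a => ContinuousLinearMap.ext (hc a)
  refine Submodule.centralizer_centralizer_compression_image_eq
    (fun _ => V.starProjection_mem_fixedSubspace N₁) (A₁ := M₁.toStarSubalgebra)
    (A₂ := M₂.toStarSubalgebra) hM₁₂ (fun a ha _ => V.apply_mem_fixedSubspace_of_commute ?_)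
    (fun b hb _ => V.apply_mem_fixedSubspace_of_commute ?_)
  · rintro ⟨s₁, s₂, x⟩ (rfl : s₁ = 1)
    change Commute (U _) a
    rw [show ((1 : S₁), s₂, x) = (1, s₂, 1) * (1, 1, x) by simp, hU_mul]
    exact Commute.mul_left (hUM₁ s₂ a ha) ((hUN x).1 a ha)
  · rintro ⟨s₁, s₂, x⟩ (rfl : s₂ = 1)
    change Commute (U _) b
    rw [show (s₁, (1 : S₂), x) = (s₁, 1, 1) * (1, 1, x) by simp, hU_mul]
    exact Commute.mul_left (hUM₂ s₁ b hb) ((hUN x).2 b hb)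

/-- Disjoint additivity for lattice systems with a product constraint
group `S = S₁ × S₂ × N`: if `M₁` and `M₂` commute elementwise, `U (s₁,1,1)` commutes
with `M₂`, `U (1,s₂,1)` commutes with `M₁`, and `U (1,1,x)` commutes with both, then,
within the bounded operators on the invariant subspace `K = H_S`, the double commutant
of the compression of `(M₁ ∪ M₂)''` equals the double commutant of
`c(M₁) ∪ c(M₂)`. -/
theorem disjoint_additivity_lattice
    {H : Type*} [NormedAddCommGroup H] [InnerProductSpace ℂ H] [CompleteSpace H]
    {S₁ S₂ N : Type*}
    [Group S₁] [TopologicalSpace S₁] [IsTopologicalGroup S₁] [CompactSpace S₁] [T2Space S₁]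
    [Group S₂] [TopologicalSpace S₂] [IsTopologicalGroup S₂] [CompactSpace S₂] [T2Space S₂]
    [Group N] [TopologicalSpace N] [IsTopologicalGroup N] [CompactSpace N] [T2Space N]
    [MeasurableSpace (S₁ × S₂ × N)] [BorelSpace (S₁ × S₂ × N)]
    (μ : Measure (S₁ × S₂ × N)) [μ.IsHaarMeasure] [IsProbabilityMeasure μ]
    [μ.IsMulRightInvariant] [μ.IsInvInvariant]
    (U : S₁ × S₂ × N → (H →L[ℂ] H))
    (hU_mul : ∀ s t : S₁ × S₂ × N, U (s * t) = U s * U t)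
    (hU_unitary : ∀ s : S₁ × S₂ × N, U s ∈ unitary (H →L[ℂ] H))
    (hU_cont : ∀ ψ : H, Continuous fun s => U s ψ)
    (M₁ M₂ : VonNeumannAlgebra H)
    (hM₁₂ : ∀ a ∈ M₁, ∀ b ∈ M₂, a * b = b * a)
    (hUM₂ : ∀ (s₁ : S₁), ∀ b ∈ M₂, U (s₁, 1, 1) * b = b * U (s₁, 1, 1))
    (hUM₁ : ∀ (s₂ : S₂), ∀ a ∈ M₁, U (1, s₂, 1) * a = a * U (1, s₂, 1))
    (hUN : ∀ (x : N), (∀ a ∈ M₁, U (1, 1, x) * a = a * U (1, 1, x)) ∧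
      (∀ b ∈ M₂, U (1, 1, x) * b = b * U (1, 1, x)))
    (K : Submodule ℂ H) [K.HasOrthogonalProjection]
    (hK : (K : Set H) = {ψ : H | ∀ s : S₁ × S₂ × N, U s ψ = ψ})
    (c : (H →L[ℂ] H) → (K →L[ℂ] K))
    (hc : ∀ (a : H →L[ℂ] H) (ψ : K), c a ψ = K.orthogonalProjectionOnto (a ψ)) :
    Set.centralizer (Set.centralizer
        (c '' (Set.centralizer (Set.centralizer ((M₁ : Set (H →L[ℂ] H)) ∪ (M₂ : Set (H →L[ℂ] H))))))) =
      Set.centralizer (Set.centralizer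
        ((c '' (M₁ : Set (H →L[ℂ] H))) ∪ (c '' (M₂ : Set (H →L[ℂ] H))))) :=
  disjoint_additivity_lattice_general U hU_mul hU_unitary M₁ M₂ hM₁₂ hUM₂ hUM₁ hUN K hK c hc
end

section
/- Quotient factorization for compact groups: let G be a compact Hausdorff topological group, N a closed normal subgroup, and H₁, H₂ closed subgroups of G such that (i) H₁ and H₂ commute elementwise, (ii) the set of products H₁H₂N = {h₁h₂n : h₁ ∈ H₁, h₂ ∈ H₂, n ∈ N} is dense in G, and (iii) whenever h₁ ∈ H₁ and h₂ ∈ H₂ satisfy h₁h₂ ∈ N, one has h₁ ∈ N. Then the quotient topological group G/N is isomorphic, as a topological group (a group isomorphism that is also a homeomorphism), to the product (H₁/(H₁ ∩ N)) × (H₂/(H₂ ∩ N)). -/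
/-!
Since `H₁` and `H₂` commute, multiplication induces a continuous homomorphism
`(H₁/(H₁ ∩ N)) × (H₂/(H₂ ∩ N)) → G/N`. Hypothesis (iii) makes it injective. Its
image is compact, hence closed, and it contains the dense image of `H₁H₂N`, so it is
surjective. A continuous bijection from a compact space onto a Hausdorff one is a homeomorphism.
-/

theorem Continuous.surjective_of_denseRange {X Y : Type*} [TopologicalSpace X]
    [TopologicalSpace Y] [CompactSpace X] [T2Space Y] {f : X → Y} (hf : Continuous f)
    (hd : DenseRange f) : Function.Surjective f := by
  rw [← Set.range_eq_univ, ← hd.closure_range, (isCompact_range hf).isClosed.closure_eq]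

noncomputable def ContinuousMulEquiv.ofBijectiveCompactToT2 {A B : Type*} [Group A] [Group B]
    [TopologicalSpace A] [TopologicalSpace B] [CompactSpace A] [T2Space B] (f : A →* B)
    (hf : Continuous f) (hbij : Function.Bijective f) : A ≃ₜ* B where
  toMulEquiv := MulEquiv.ofBijective f hbij
  continuous_toFun := hf
  continuous_invFun :=
    (hf.homeoOfEquivCompactToT2 (f := (MulEquiv.ofBijective f hbij).toEquiv)).symm.continuous

namespace QuotientGroup

open Subgroup

variable {G : Type*} [Group G] (N : Subgroup G) [N.Normal]

def mapSubgroupOf (H : Subgroup G) : H ⧸ N.subgroupOf H →* G ⧸ N :=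
  map (N.subgroupOf H) N H.subtype le_rfl

theorem continuous_mapSubgroupOf [TopologicalSpace G] (H : Subgroup G) :
    Continuous (mapSubgroupOf N H) :=
  continuous_quot_lift _ (continuous_quot_mk.comp continuous_subtype_val)

variable {N} {H₁ H₂ : Subgroup G} (hcomm : ∀ h₁ ∈ H₁, ∀ h₂ ∈ H₂, Commute h₁ h₂)

def mapProdSubgroupOf : (H₁ ⧸ N.subgroupOf H₁) × (H₂ ⧸ N.subgroupOf H₂) →* G ⧸ N :=
  (mapSubgroupOf N H₁).noncommCoprod (mapSubgroupOf N H₂) <| by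
    rintro ⟨a⟩ ⟨b⟩
    exact (hcomm a a.2 b b.2).map (mk' N)

theorem continuous_mapProdSubgroupOf [TopologicalSpace G] [IsTopologicalGroup G] :
    Continuous (mapProdSubgroupOf (N := N) hcomm) :=
  ((continuous_mapSubgroupOf N H₁).comp continuous_fst).mul
    ((continuous_mapSubgroupOf N H₂).comp continuous_snd)

theorem mapProdSubgroupOf_injective (hsep : ∀ h₁ ∈ H₁, ∀ h₂ ∈ H₂, h₁ * h₂ ∈ N → h₁ ∈ N) :
    Function.Injective (mapProdSubgroupOf (N := N) hcomm) := by
  refine (injective_iff_map_eq_one _).mpr ?_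
  rintro ⟨⟨a⟩, ⟨b⟩⟩ hab
  have hab : (a * b : G) ∈ N := (eq_one_iff _).mp hab
  have ha : (a : G) ∈ N := hsep a a.2 b b.2 hab
  have hb : (b : G) ∈ N := (N.mul_mem_cancel_left ha).mp hab
  exact Prod.ext ((eq_one_iff a).mpr (mem_subgroupOf.mpr ha))
    ((eq_one_iff b).mpr (mem_subgroupOf.mpr hb))

theorem denseRange_mapProdSubgroupOf [TopologicalSpace G]
    (hdense : Dense {g : G | ∃ h₁ ∈ H₁, ∃ h₂ ∈ H₂, ∃ n ∈ N, g = h₁ * h₂ * n}) :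
    DenseRange (mapProdSubgroupOf (N := N) hcomm) := by
  refine (mk_surjective.denseRange.dense_image continuous_quot_mk hdense).mono ?_
  rintro _ ⟨_, ⟨h₁, hh₁, h₂, hh₂, n, hn, rfl⟩, rfl⟩
  exact ⟨(mk ⟨h₁, hh₁⟩, mk ⟨h₂, hh₂⟩), (mk_mul_of_mem _ hn).symm⟩

end QuotientGroup

open QuotientGroup in
theorem quotient_factorization_compact_general
    {G : Type*} [Group G] [TopologicalSpace G] [IsTopologicalGroup G]
    [CompactSpace G]
    (N H₁ H₂ : Subgroup G) [N.Normal]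
    (hNclosed : IsClosed (N : Set G))
    (hH₁closed : IsClosed (H₁ : Set G)) (hH₂closed : IsClosed (H₂ : Set G))
    (hcomm : ∀ h₁ ∈ H₁, ∀ h₂ ∈ H₂, h₁ * h₂ = h₂ * h₁)
    (hdense : Dense {g : G | ∃ h₁ ∈ H₁, ∃ h₂ ∈ H₂, ∃ n ∈ N, g = h₁ * h₂ * n})
    (hsep : ∀ h₁ ∈ H₁, ∀ h₂ ∈ H₂, h₁ * h₂ ∈ N → h₁ ∈ N) :
    ∃ e : (G ⧸ N) ≃* ((↥H₁ ⧸ N.subgroupOf H₁) × (↥H₂ ⧸ N.subgroupOf H₂)),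
      Continuous e ∧ Continuous e.symm := by
  have : IsClosed (N : Set G) := hNclosed
  have : CompactSpace H₁ := isCompact_iff_compactSpace.mp hH₁closed.isCompact
  have : CompactSpace H₂ := isCompact_iff_compactSpace.mp hH₂closed.isCompact
  have hcont := continuous_mapProdSubgroupOf (N := N) hcomm
  let e := ContinuousMulEquiv.ofBijectiveCompactToT2 _ hcont
    ⟨mapProdSubgroupOf_injective hcomm hsep,
      hcont.surjective_of_denseRange (denseRange_mapProdSubgroupOf hcomm hdense)⟩
  exact ⟨e.symm.toMulEquiv, e.symm.continuous, e.continuous⟩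

/-- Quotient factorization for compact groups: let `G` be a compact
Hausdorff topological group, `N` a closed normal subgroup, and `H₁`, `H₂` closed
subgroups such that (i) `H₁` and `H₂` commute elementwise, (ii) the set of products
`H₁H₂N` is dense in `G`, and (iii) `h₁ h₂ ∈ N` with `h₁ ∈ H₁`, `h₂ ∈ H₂` implies
`h₁ ∈ N`.  Then `G/N` is isomorphic, as a topological group, to
`(H₁/(H₁ ∩ N)) × (H₂/(H₂ ∩ N))`. -/
theorem quotient_factorization_compact
    {G : Type*} [Group G] [TopologicalSpace G] [IsTopologicalGroup G]
    [CompactSpace G] [T2Space G]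
    (N H₁ H₂ : Subgroup G) [N.Normal]
    (hNclosed : IsClosed (N : Set G))
    (hH₁closed : IsClosed (H₁ : Set G)) (hH₂closed : IsClosed (H₂ : Set G))
    (hcomm : ∀ h₁ ∈ H₁, ∀ h₂ ∈ H₂, h₁ * h₂ = h₂ * h₁)
    (hdense : Dense {g : G | ∃ h₁ ∈ H₁, ∃ h₂ ∈ H₂, ∃ n ∈ N, g = h₁ * h₂ * n})
    (hsep : ∀ h₁ ∈ H₁, ∀ h₂ ∈ H₂, h₁ * h₂ ∈ N → h₁ ∈ N) :
    ∃ e : (G ⧸ N) ≃* ((↥H₁ ⧸ N.subgroupOf H₁) × (↥H₂ ⧸ N.subgroupOf H₂)),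
      Continuous e ∧ Continuous e.symm :=
  quotient_factorization_compact_general N H₁ H₂ hNclosed hH₁closed hH₂closed hcomm hdense hsep
end

section
/- Haag duality for the Majorana chain with an even number of fermions: let R ⊆ {1, …, 2ℓ} and let x ∈ Mat be homogeneous with respect to fermion parity. (i) If F x F⁻¹ = x (x bosonic), then x ∈ A(R) if and only if x commutes with χ_j for every j ∈ {1, …, 2ℓ} with j ∉ R. (ii) If F x F⁻¹ = −x (x fermionic), then x ∈ A(R) if and only if x anticommutes with χ_j (x χ_j = −χ_j x) for every j ∈ {1, …, 2ℓ} with j ∉ R. -/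
noncomputable section

/-- The Pauli `X` matrix. -/
def PauliX : Matrix (Fin 2) (Fin 2) ℂ := !![0, 1; 1, 0]

/-- The Pauli `Y` matrix. -/
def PauliY : Matrix (Fin 2) (Fin 2) ℂ := !![0, -Complex.I; Complex.I, 0]

/-- The Pauli `Z` matrix. -/
def PauliZ : Matrix (Fin 2) (Fin 2) ℂ := !![1, 0; 0, -1]

/-- `Mat ℓ` is the algebra of `2^ℓ × 2^ℓ` complex matrices, realized as matrices indexed
by `Fin ℓ → Fin 2` (the `ℓ`-fold Kronecker product of `2 × 2` matrix algebras). -/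
abbrev Mat (ℓ : ℕ) := Matrix (Fin ℓ → Fin 2) (Fin ℓ → Fin 2) ℂ

/-- The `ℓ`-fold Kronecker product of an `ℓ`-tuple of `2 × 2` matrices. -/
def kron {ℓ : ℕ} (A : Fin ℓ → Matrix (Fin 2) (Fin 2) ℂ) : Mat ℓ :=
  Matrix.of fun i j => ∏ k, A k (i k) (j k)

/-- The Majorana matrices (1-based index `j` with `1 ≤ j ≤ 2ℓ`):
`χ_{2k−1} = Z^{⊗(k−1)} ⊗ X ⊗ 1^{⊗(ℓ−k)}` and `χ_{2k} = Z^{⊗(k−1)} ⊗ Y ⊗ 1^{⊗(ℓ−k)}`. -/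
def chi (ℓ : ℕ) (j : ℕ) : Mat ℓ :=
  kron fun m =>
    if 2 * (m : ℕ) + 2 < j then PauliZ
    else if 2 * (m : ℕ) + 1 = j then PauliX
    else if 2 * (m : ℕ) + 2 = j then PauliY
    else 1

/-- The fermion parity operator `F = Z^{⊗ℓ}`. -/
def fermionParity (ℓ : ℕ) : Mat ℓ := kron fun _ => PauliZ

/-- `A(R)`: the unital subalgebra of `Mat ℓ` generated by the Majorana matrices
`χ_j` with `j ∈ R`. -/
def majoranaAlgebra (ℓ : ℕ) (R : Set ℕ) : Subalgebra ℂ (Mat ℓ) :=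
  Algebra.adjoin ℂ {x : Mat ℓ | ∃ j ∈ R, x = chi ℓ j}

end

/-!
Conjugation by `χ_j` is an algebra automorphism that fixes `χ_j` and negates every other
Majorana matrix; since `F = χ_{2ℓ+1}` (a product of `Z`s), the same holds for `F`. So for `j ∉ R`
conjugation by `χ_j` and by `F` agree on `A(R)`, which gives the forward implications.
Conversely, the ordered monomials `χ_S`, `S ⊆ {1, …, 2ℓ}`, are orthogonal for the trace form
and hence, counting dimensions, a basis of `Mat`. Conjugation by `F χ_j` negates `χ_S` exactly
when `j ∈ S`, and it fixes an `x` satisfying the (anti)commutation relation; taking traces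
against `χ_S` shows that the coefficient of `χ_S` in `x` vanishes whenever `S ⊄ R`.
-/

open Matrix

section Kronecker

variable {ℓ : ℕ}

lemma kron_mul_kron (A B : Fin ℓ → Matrix (Fin 2) (Fin 2) ℂ) :
    kron A * kron B = kron fun m => A m * B m := by
  ext i j
  simp only [kron, mul_apply, of_apply, Finset.prod_univ_sum, Fintype.piFinset_univ,
    Finset.prod_mul_distrib]

lemma kron_one : kron (fun _ : Fin ℓ => (1 : Matrix (Fin 2) (Fin 2) ℂ)) = 1 := by
  ext i j
  simp [kron, one_apply, Fintype.prod_boole, funext_iff]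

lemma kron_smul (c : Fin ℓ → ℂ) (A : Fin ℓ → Matrix (Fin 2) (Fin 2) ℂ) :
    kron (fun m => c m • A m) = (∏ m, c m) • kron A := by
  ext i j
  simp only [kron, of_apply, Matrix.smul_apply, smul_eq_mul, Finset.prod_mul_distrib]

lemma kron_mul_kron_eq_smul {A B : Fin ℓ → Matrix (Fin 2) (Fin 2) ℂ} (c : Fin ℓ → ℂ)
    (h : ∀ m, A m * B m = c m • (B m * A m)) :
    kron A * kron B = (∏ m, c m) • (kron B * kron A) := by
  simp only [kron_mul_kron, h, kron_smul]

end Kronecker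

@[simp] lemma PauliX_mul_self : PauliX * PauliX = 1 := by
  ext i j; fin_cases i <;> fin_cases j <;> simp [PauliX, mul_apply]

@[simp] lemma PauliY_mul_self : PauliY * PauliY = 1 := by
  ext i j; fin_cases i <;> fin_cases j <;> simp [PauliY, mul_apply]

@[simp] lemma PauliZ_mul_self : PauliZ * PauliZ = 1 := by
  ext i j; fin_cases i <;> fin_cases j <;> simp [PauliZ, mul_apply]

lemma PauliX_mul_PauliY : PauliX * PauliY = -(PauliY * PauliX) := by
  ext i j; fin_cases i <;> fin_cases j <;> simp [PauliX, PauliY, mul_apply]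

lemma PauliX_mul_PauliZ : PauliX * PauliZ = -(PauliZ * PauliX) := by
  ext i j; fin_cases i <;> fin_cases j <;> simp [PauliX, PauliZ, mul_apply]

lemma PauliY_mul_PauliZ : PauliY * PauliZ = -(PauliZ * PauliY) := by
  ext i j; fin_cases i <;> fin_cases j <;> simp [PauliY, PauliZ, mul_apply]

lemma chi_mul_self (ℓ j : ℕ) : chi ℓ j * chi ℓ j = 1 := by
  rw [chi, kron_mul_kron, ← kron_one]
  congr 1
  funext m
  split_ifs <;> simp

lemma chi_mul_chi_of_lt {ℓ j k : ℕ} (hj : 1 ≤ j) (hjk : j < k) (hk : k ≤ 2 * ℓ + 1) :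
    chi ℓ j * chi ℓ k = -(chi ℓ k * chi ℓ j) := by
  have hsign : ∏ m : Fin ℓ, (if (m : ℕ) = (j - 1) / 2 then -1 else 1 : ℂ) = -1 := by
    rw [Fin.prod_univ_eq_prod_range (fun m => if m = (j - 1) / 2 then (-1 : ℂ) else 1),
      Finset.prod_ite_eq', if_pos (Finset.mem_range.mpr (by omega))]
  rw [chi, chi, kron_mul_kron_eq_smul _ fun m => ?_, hsign, neg_one_smul]
  split_ifs <;> first
    | omega
    | simp [PauliX_mul_PauliY, PauliX_mul_PauliZ, PauliY_mul_PauliZ]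

lemma chi_mul_chi_of_ne {ℓ j k : ℕ} (hj : j ∈ Finset.Icc 1 (2 * ℓ + 1))
    (hk : k ∈ Finset.Icc 1 (2 * ℓ + 1)) (hjk : j ≠ k) :
    chi ℓ j * chi ℓ k = -(chi ℓ k * chi ℓ j) := by
  rw [Finset.mem_Icc] at hj hk
  rcases hjk.lt_or_gt with h | h
  · exact chi_mul_chi_of_lt hj.1 h hk.2
  · rw [chi_mul_chi_of_lt hk.1 h hj.2, neg_neg]

lemma fermionParity_eq_chi (ℓ : ℕ) : fermionParity ℓ = chi ℓ (2 * ℓ + 1) := by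
  unfold fermionParity chi
  congr 1
  funext m
  rw [if_pos (by omega)]

section Conjugation

variable {R A : Type*} [CommSemiring R] [Semiring A] [Algebra R A]

def conjAlgHom (u : A) (hu : u * u = 1) : A →ₐ[R] A where
  toFun y := u * y * u
  map_one' := by rw [mul_one, hu]
  map_mul' y z := by
    change u * (y * z) * u = u * y * u * (u * z * u)
    simp only [mul_assoc]
    rw [← mul_assoc u u, hu, one_mul]
  map_zero' := by simp
  map_add' y z := by simp [mul_add, add_mul]
  commutes' r := by simp [Algebra.algebraMap_eq_smul_one, hu]

@[simp] lemma conjAlgHom_apply (u : A) (hu : u * u = 1) (y : A) :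
    conjAlgHom (R := R) u hu y = u * y * u := rfl

lemma conj_eq_smul_iff {u y : A} (hu : u * u = 1) (c : R) :
    u * y * u = c • y ↔ y * u = c • (u * y) := by
  constructor <;> intro h
  · rw [← mul_smul_comm, ← h, ← mul_assoc, ← mul_assoc, hu, one_mul]
  · rw [mul_assoc, h, mul_smul_comm, ← mul_assoc, hu, one_mul]

lemma map_list_prod_eq_smul (φ : A →ₐ[R] A) {ι : Type*} (f : ι → A) (c : ι → R) (l : List ι)
    (h : ∀ i ∈ l, φ (f i) = c i • f i) :
    φ (l.map f).prod = (l.map c).prod • (l.map f).prod := by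
  induction l with
  | nil => simp
  | cons a t ih =>
    simp only [List.map_cons, List.prod_cons, map_mul, h a List.mem_cons_self,
      ih fun i hi => h i (List.mem_cons_of_mem a hi), smul_mul_smul_comm]

end Conjugation

lemma Matrix.trace_mul_mul_of_mul_self_eq_one {n R : Type*} [Fintype n] [DecidableEq n]
    [CommSemiring R] {u : Matrix n n R} (hu : u * u = 1) (y : Matrix n n R) :
    trace (u * y * u) = trace y := by
  rw [trace_mul_cycle, hu, one_mul]

section Orthogonal

variable {n ι K : Type*} [Fintype n] [Fintype ι] [Field K] {v : ι → Matrix n n K}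

lemma Matrix.trace_mul_sum_smul_of_pairwise (hv : Pairwise fun i j => trace (v i * v j) = 0)
    (c : ι → K) (i : ι) : trace (v i * ∑ k, c k • v k) = c i * trace (v i * v i) := by
  simp only [Finset.mul_sum, mul_smul_comm, trace_sum, trace_smul, smul_eq_mul]
  exact Finset.sum_eq_single i (fun k _ hki => by rw [hv hki.symm, mul_zero])
    (fun hi => absurd (Finset.mem_univ i) hi)

lemma Matrix.linearIndependent_of_pairwise_trace_mul
    (hv : Pairwise fun i j => trace (v i * v j) = 0) (hvv : ∀ i, trace (v i * v i) ≠ 0) :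
    LinearIndependent K v := by
  rw [Fintype.linearIndependent_iff]
  intro c hc i
  have h := trace_mul_sum_smul_of_pairwise hv c i
  rw [hc, mul_zero, trace_zero, eq_comm, mul_eq_zero] at h
  exact h.resolve_right (hvv i)

end Orthogonal

abbrev chiConj (ℓ j : ℕ) : Mat ℓ →ₐ[ℂ] Mat ℓ := conjAlgHom (chi ℓ j) (chi_mul_self ℓ j)

lemma chiConj_chi_self (ℓ j : ℕ) : chiConj ℓ j (chi ℓ j) = chi ℓ j := by
  rw [conjAlgHom_apply, chi_mul_self, one_mul]

lemma chiConj_chi_of_ne {ℓ j k : ℕ} (hj : j ∈ Finset.Icc 1 (2 * ℓ + 1))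
    (hk : k ∈ Finset.Icc 1 (2 * ℓ + 1)) (hjk : j ≠ k) : chiConj ℓ j (chi ℓ k) = -chi ℓ k := by
  rw [conjAlgHom_apply, chi_mul_chi_of_ne hj hk hjk, neg_mul, mul_assoc, chi_mul_self, mul_one]

lemma mem_Icc_two_mul_add_one {ℓ j : ℕ} (hj : j ∈ Finset.Icc 1 (2 * ℓ)) :
    j ∈ Finset.Icc 1 (2 * ℓ + 1) :=
  Finset.Icc_subset_Icc_right (Nat.le_succ _) hj

lemma chiConj_parity_chi {ℓ k : ℕ} (hk : k ∈ Finset.Icc 1 (2 * ℓ)) :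
    chiConj ℓ (2 * ℓ + 1) (chi ℓ k) = -chi ℓ k :=
  chiConj_chi_of_ne (by simp) (mem_Icc_two_mul_add_one hk) (by rw [Finset.mem_Icc] at hk; omega)

def chiProd (ℓ : ℕ) (S : Finset ℕ) : Mat ℓ := (S.sort.map (chi ℓ)).prod

lemma map_chiProd_eq_smul {ℓ : ℕ} (φ : Mat ℓ →ₐ[ℂ] Mat ℓ) (c : ℕ → ℂ) {S : Finset ℕ}
    (h : ∀ k ∈ S, φ (chi ℓ k) = c k • chi ℓ k) :
    φ (chiProd ℓ S) = (∏ k ∈ S, c k) • chiProd ℓ S := by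
  rw [chiProd, map_list_prod_eq_smul φ _ c _ fun k hk => h k ((Finset.mem_sort _).mp hk),
    Finset.prod_eq_multiset_prod, ← Multiset.prod_coe, ← Multiset.map_coe, Finset.sort_eq]

lemma chiConj_chiProd_of_notMem {ℓ j : ℕ} {S : Finset ℕ} (hj : j ∈ Finset.Icc 1 (2 * ℓ + 1))
    (hS : S ⊆ Finset.Icc 1 (2 * ℓ + 1)) (hjS : j ∉ S) :
    chiConj ℓ j (chiProd ℓ S) = (-1 : ℂ) ^ S.card • chiProd ℓ S := by
  rw [map_chiProd_eq_smul _ (fun _ => -1) fun k hk =>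
      by rw [chiConj_chi_of_ne hj (hS hk) (ne_of_mem_of_not_mem hk hjS).symm, neg_one_smul],
    Finset.prod_const]

lemma chiProd_mul_self (ℓ : ℕ) {S : Finset ℕ} (hS : S ⊆ Finset.Icc 1 (2 * ℓ + 1)) :
    chiProd ℓ S * chiProd ℓ S = (-1 : ℂ) ^ S.card.choose 2 • 1 := by
  induction S using Finset.induction_on_min with
  | empty => simp [chiProd]
  | insert a t hat ih =>
    have hat' : a ∉ t := fun h => lt_irrefl a (hat a h)
    have hcons : chiProd ℓ (insert a t) = chi ℓ a * chiProd ℓ t := by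
      rw [chiProd, chiProd, Finset.sort_insert _ (fun b hb => (hat b hb).le) hat', List.map_cons,
        List.prod_cons]
    have ht : t ⊆ Finset.Icc 1 (2 * ℓ + 1) := (Finset.subset_insert a t).trans hS
    have hσ := chiConj_chiProd_of_notMem (hS (Finset.mem_insert_self a t)) ht hat'
    rw [conjAlgHom_apply] at hσ
    rw [hcons, ← mul_assoc, hσ, smul_mul_assoc, ih ht, smul_smul,
      Finset.card_insert_of_notMem hat', Nat.choose_succ_succ', Nat.choose_one_right, pow_add]

/-- Conjugation by `F χ_j`. -/
abbrev parityTwist (ℓ j : ℕ) : Mat ℓ →ₐ[ℂ] Mat ℓ :=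
  (chiConj ℓ (2 * ℓ + 1)).comp (chiConj ℓ j)

lemma parityTwist_chiProd {ℓ j : ℕ} {S : Finset ℕ} (hj : j ∈ Finset.Icc 1 (2 * ℓ))
    (hS : S ⊆ Finset.Icc 1 (2 * ℓ)) :
    parityTwist ℓ j (chiProd ℓ S) = (if j ∈ S then -1 else 1 : ℂ) • chiProd ℓ S := by
  rw [map_chiProd_eq_smul _ (fun k => if k = j then -1 else 1) fun k hk => ?_,
    Finset.prod_ite_eq']
  rw [AlgHom.comp_apply]
  split_ifs with hkj
  · rw [hkj, chiConj_chi_self, chiConj_parity_chi hj, neg_one_smul]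
  · rw [chiConj_chi_of_ne (mem_Icc_two_mul_add_one hj) (mem_Icc_two_mul_add_one (hS hk))
      (Ne.symm hkj), map_neg, chiConj_parity_chi (hS hk), neg_neg, one_smul]

lemma trace_eq_zero_of_parityTwist_eq_neg {ℓ j : ℕ} {y : Mat ℓ} (h : parityTwist ℓ j y = -y) :
    trace y = 0 := by
  have h' := congrArg trace h
  rw [AlgHom.comp_apply, conjAlgHom_apply, trace_mul_mul_of_mul_self_eq_one (chi_mul_self _ _),
    conjAlgHom_apply, trace_mul_mul_of_mul_self_eq_one (chi_mul_self _ _), trace_neg] at h'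
  exact CharZero.eq_neg_self_iff.mp h'

lemma trace_chiProd_mul_chiProd_of_ne {ℓ : ℕ} {S T : Finset ℕ} (hS : S ⊆ Finset.Icc 1 (2 * ℓ))
    (hT : T ⊆ Finset.Icc 1 (2 * ℓ)) (hST : S ≠ T) : trace (chiProd ℓ S * chiProd ℓ T) = 0 := by
  obtain ⟨j, hj⟩ : ∃ j, ¬(j ∈ S ↔ j ∈ T) := by
    by_contra! h
    exact hST (Finset.ext h)
  have hjIcc : j ∈ Finset.Icc 1 (2 * ℓ) := by
    by_cases hjS : j ∈ S
    · exact hS hjS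
    · exact hT (by tauto)
  apply trace_eq_zero_of_parityTwist_eq_neg (j := j)
  rw [map_mul, parityTwist_chiProd hjIcc hS, parityTwist_chiProd hjIcc hT, smul_mul_smul_comm]
  split_ifs <;> simp_all

lemma trace_chiProd_mul_self_ne_zero (ℓ : ℕ) {S : Finset ℕ} (hS : S ⊆ Finset.Icc 1 (2 * ℓ)) :
    trace (chiProd ℓ S * chiProd ℓ S) ≠ 0 := by
  rw [chiProd_mul_self ℓ fun k hk => mem_Icc_two_mul_add_one (hS hk), trace_smul, trace_one]
  simp

lemma pairwise_trace_chiProd_mul_chiProd (ℓ : ℕ) :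
    Pairwise fun S T : (Finset.Icc 1 (2 * ℓ)).powerset =>
      trace (chiProd ℓ S * chiProd ℓ T) = 0 :=
  fun S T hST => trace_chiProd_mul_chiProd_of_ne (Finset.mem_powerset.mp S.2)
    (Finset.mem_powerset.mp T.2) (Subtype.coe_injective.ne hST)

lemma linearIndependent_chiProd (ℓ : ℕ) :
    LinearIndependent ℂ fun S : (Finset.Icc 1 (2 * ℓ)).powerset => chiProd ℓ S :=
  linearIndependent_of_pairwise_trace_mul (pairwise_trace_chiProd_mul_chiProd ℓ)
    fun S => trace_chiProd_mul_self_ne_zero ℓ (Finset.mem_powerset.mp S.2)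

lemma span_chiProd_eq_top (ℓ : ℕ) :
    Submodule.span ℂ (Set.range fun S : (Finset.Icc 1 (2 * ℓ)).powerset => chiProd ℓ S) = ⊤ := by
  refine (linearIndependent_chiProd ℓ).span_eq_top_of_card_eq_finrank' ?_
  rw [Fintype.card_coe, Finset.card_powerset, Nat.card_Icc, Module.finrank_matrix,
    Module.finrank_self, Fintype.card_fun, Fintype.card_fin, Fintype.card_fin, ← pow_add]
  simp only [mul_one, add_tsub_cancel_right, two_mul]

lemma chiProd_mem_majoranaAlgebra {ℓ : ℕ} {R : Set ℕ} {S : Finset ℕ} (hSR : ↑S ⊆ R) :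
    chiProd ℓ S ∈ majoranaAlgebra ℓ R :=
  Subalgebra.list_prod_mem _ fun _ hy => by
    obtain ⟨k, hk, rfl⟩ := List.mem_map.mp hy
    exact Algebra.subset_adjoin ⟨k, hSR ((Finset.mem_sort _).mp hk), rfl⟩

lemma chiConj_eq_of_mem_majoranaAlgebra {ℓ : ℕ} {R : Set ℕ}
    (hR : R ⊆ {j | 1 ≤ j ∧ j ≤ 2 * ℓ}) {x : Mat ℓ} (hx : x ∈ majoranaAlgebra ℓ R) {j : ℕ}
    (hj : j ∈ Finset.Icc 1 (2 * ℓ)) (hjR : j ∉ R) :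
    chiConj ℓ j x = chiConj ℓ (2 * ℓ + 1) x := by
  refine AlgHom.adjoin_le_equalizer _ _ ?_ hx
  rintro _ ⟨k, hkR, rfl⟩
  have hk : k ∈ Finset.Icc 1 (2 * ℓ) := Finset.mem_Icc.mpr (hR hkR)
  rw [chiConj_chi_of_ne (mem_Icc_two_mul_add_one hj) (mem_Icc_two_mul_add_one hk)
    (by rintro rfl; exact hjR hkR), chiConj_parity_chi hk]

lemma mem_majoranaAlgebra_of_parityTwist_eq {ℓ : ℕ} {R : Set ℕ} {x : Mat ℓ}
    (hx : ∀ j ∈ Finset.Icc 1 (2 * ℓ), j ∉ R → parityTwist ℓ j x = x) :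
    x ∈ majoranaAlgebra ℓ R := by
  have hspan : x ∈ Submodule.span ℂ _ := span_chiProd_eq_top ℓ ▸ Submodule.mem_top
  obtain ⟨c, rfl⟩ := (Submodule.mem_span_range_iff_exists_fun ℂ).mp hspan
  refine Subalgebra.sum_mem _ fun S _ => ?_
  by_cases hSR : ↑(S : Finset ℕ) ⊆ R
  · exact Subalgebra.smul_mem _ (chiProd_mem_majoranaAlgebra hSR) _
  obtain ⟨j, hjS, hjR⟩ := Set.not_subset.mp hSR
  rw [Finset.mem_coe] at hjS
  have hS := Finset.mem_powerset.mp S.2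
  suffices c S = 0 by rw [this, zero_smul]; exact zero_mem _
  have htrace : trace (chiProd ℓ S * ∑ T, c T • chiProd ℓ T) = 0 := by
    refine trace_eq_zero_of_parityTwist_eq_neg (j := j) ?_
    rw [map_mul, hx j (hS hjS) hjR, parityTwist_chiProd (hS hjS) hS, if_pos hjS, neg_one_smul,
      neg_mul]
  rw [trace_mul_sum_smul_of_pairwise (pairwise_trace_chiProd_mul_chiProd ℓ)] at htrace
  exact (mul_eq_zero.mp htrace).resolve_right (trace_chiProd_mul_self_ne_zero ℓ hS)

theorem mem_majoranaAlgebra_iff_of_chiConj_eq_smul {ℓ : ℕ} {R : Set ℕ}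
    (hR : R ⊆ {j | 1 ≤ j ∧ j ≤ 2 * ℓ}) {x : Mat ℓ} {ε : ℂ} (hε : ε * ε = 1)
    (hx : chiConj ℓ (2 * ℓ + 1) x = ε • x) :
    x ∈ majoranaAlgebra ℓ R ↔ ∀ j ∈ Finset.Icc 1 (2 * ℓ), j ∉ R → chiConj ℓ j x = ε • x := by
  refine ⟨fun hxR j hj hjR => hx ▸ chiConj_eq_of_mem_majoranaAlgebra hR hxR hj hjR,
    fun h => mem_majoranaAlgebra_of_parityTwist_eq fun j hj hjR => ?_⟩
  rw [AlgHom.comp_apply, h j hj hjR, map_smul, hx, smul_smul, hε, one_smul]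

/-- Haag duality for the Majorana chain with an even number (`2ℓ`) of
fermions: let `R ⊆ {1, …, 2ℓ}` and let `x ∈ Mat ℓ` be homogeneous with respect to
fermion parity `F`.
(i) If `F x F⁻¹ = x` (`x` bosonic), then `x ∈ A(R)` iff `x` commutes with `χ_j` for
every `j ∈ {1, …, 2ℓ}` with `j ∉ R`.
(ii) If `F x F⁻¹ = −x` (`x` fermionic), then `x ∈ A(R)` iff `x` anticommutes with
`χ_j` for every `j ∈ {1, …, 2ℓ}` with `j ∉ R`. -/
theorem majorana_haag_duality (ℓ : ℕ) (R : Set ℕ)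
    (hR : R ⊆ {j | 1 ≤ j ∧ j ≤ 2 * ℓ}) (x : Mat ℓ) :
    (fermionParity ℓ * x * (fermionParity ℓ)⁻¹ = x →
      (x ∈ majoranaAlgebra ℓ R ↔
        ∀ j : ℕ, 1 ≤ j → j ≤ 2 * ℓ → j ∉ R → x * chi ℓ j = chi ℓ j * x)) ∧
    (fermionParity ℓ * x * (fermionParity ℓ)⁻¹ = -x →
      (x ∈ majoranaAlgebra ℓ R ↔
        ∀ j : ℕ, 1 ≤ j → j ≤ 2 * ℓ → j ∉ R → x * chi ℓ j = -(chi ℓ j * x))) := by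
  have hF : (fermionParity ℓ)⁻¹ = fermionParity ℓ :=
    inv_eq_left_inv (fermionParity_eq_chi ℓ ▸ chi_mul_self ℓ _)
  have key : ∀ ε : ℂ, ε * ε = 1 → fermionParity ℓ * x * (fermionParity ℓ)⁻¹ = ε • x →
      (x ∈ majoranaAlgebra ℓ R ↔
        ∀ j : ℕ, 1 ≤ j → j ≤ 2 * ℓ → j ∉ R → x * chi ℓ j = ε • (chi ℓ j * x)) := by
    intro ε hε hx
    rw [hF, fermionParity_eq_chi] at hx
    simp only [mem_majoranaAlgebra_iff_of_chiConj_eq_smul hR hε hx, Finset.mem_Icc,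
      conjAlgHom_apply, conj_eq_smul_iff (chi_mul_self ℓ _), and_imp]
  exact ⟨fun hx => by simpa using key 1 (one_mul 1) (by rwa [one_smul]),
    fun hx => by simpa using key (-1) (by norm_num) (by rwa [neg_one_smul])⟩
end
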